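/- arXiv:2307.11619 — 6 statements merged into one kernel-verified Lean document; each statement's English description precedes it below -/
import Mathlib

section
/- Let R ⊆ S be an inclusion of factors on a Hilbert space K with trivial relative commutant R' ∩ S = ℂ·1. Then there exist C*-subalgebras A_A ⊆ R and A_B ⊆ S' and a pure state ω on the C*-algebra A generated by A_A and A_B such that the GNS representation of ω is (up to unitary equivalence) the identity representation on K, with π(A_A)'' = R and π(A_B)'' = S'. -/
/-! Take `A_A = R` and `A_B = S'`. The commutant of the C*-algebra they generate is
`R' ∩ S'' = R' ∩ S = ℂ`, so it acts irreducibly. Then every closed subspace invariant under it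
has a projection in its commutant, hence is `0` or `K`; applied to the closure of `A Ω`, this
makes every unit vector `Ω` cyclic. -/

open scoped ComplexOrder

open Module End

section CyclicSubspace

variable {𝕜 E : Type*} [RCLike 𝕜] [NormedAddCommGroup E] [InnerProductSpace 𝕜 E]

def cyclicSubspace (A : Set (E →L[𝕜] E)) (v : E) : Submodule 𝕜 E :=
  (Submodule.span 𝕜 ((fun T : E →L[𝕜] E => T v) '' A)).topologicalClosure

theorem mem_cyclicSubspace_self {A : Subalgebra 𝕜 (E →L[𝕜] E)} (v : E) :
    v ∈ cyclicSubspace (A : Set (E →L[𝕜] E)) v :=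
  Submodule.le_topologicalClosure _ (Submodule.subset_span ⟨1, A.one_mem, rfl⟩)

theorem cyclicSubspace_mem_invtSubmodule {A : Subalgebra 𝕜 (E →L[𝕜] E)} {T : E →L[𝕜] E}
    (hT : T ∈ A) (v : E) :
    cyclicSubspace (A : Set (E →L[𝕜] E)) v ∈ invtSubmodule (T : E →ₗ[𝕜] E) := by
  refine Submodule.topologicalClosure_mem_invtSubmodule ?_
  rw [mem_invtSubmodule_iff_map_le, Submodule.map_span, Submodule.span_le]
  rintro _ ⟨_, ⟨U, hU, rfl⟩, rfl⟩
  exact Submodule.subset_span ⟨T * U, A.mul_mem hT hU, rfl⟩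

theorem Submodule.commute_starProjection_of_mem_invtSubmodule [CompleteSpace E]
    {U : Submodule 𝕜 E} [U.HasOrthogonalProjection] {T : E →L[𝕜] E}
    (hT : U ∈ invtSubmodule (T : E →ₗ[𝕜] E))
    (hT' : U ∈ invtSubmodule (T.adjoint : E →ₗ[𝕜] E)) :
    Commute U.starProjection T :=
  (ContinuousLinearMap.IsIdempotentElem.commute_iff U.isIdempotentElem_starProjection).mpr
    ⟨by rwa [range_starProjection], by
      rw [ker_starProjection]; exact ContinuousLinearMap.orthogonal_mem_invtSubmodule hT'⟩

theorem StarSubalgebra.cyclicSubspace_eq_top [CompleteSpace E]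
    (A : StarSubalgebra 𝕜 (E →L[𝕜] E))
    (hA : Set.centralizer (A : Set (E →L[𝕜] E)) ⊆ Set.range (fun c : 𝕜 => c • (1 : E →L[𝕜] E)))
    {v : E} (hv : v ≠ 0) :
    cyclicSubspace (A : Set (E →L[𝕜] E)) v = ⊤ := by
  set M := cyclicSubspace (A : Set (E →L[𝕜] E)) v
  have : CompleteSpace M := (Submodule.isClosed_topologicalClosure _).completeSpace_coe
  -- The projection onto `M` commutes with `A`, because `M` is invariant under `A = star A`.
  have hP : M.starProjection ∈ Set.centralizer (A : Set (E →L[𝕜] E)) := fun T hT =>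
    (M.commute_starProjection_of_mem_invtSubmodule
      (cyclicSubspace_mem_invtSubmodule (A := A.toSubalgebra) hT v)
      (cyclicSubspace_mem_invtSubmodule (A := A.toSubalgebra)
        (by rw [← ContinuousLinearMap.star_eq_adjoint]; exact star_mem (s := A) hT) v)).symm.eq
  obtain ⟨c, hc⟩ := hA hP
  have hPv : M.starProjection v = v :=
    Submodule.starProjection_eq_self_iff.mpr (mem_cyclicSubspace_self (A := A.toSubalgebra) v)
  rw [← hc] at hPv
  have hc1 : c = 1 := smul_left_injective 𝕜 hv <| by simpa using hPv
  exact Submodule.eq_top_iff'.mpr fun x =>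
    Submodule.starProjection_eq_self_iff.mp (by simp [← hc, hc1])

end CyclicSubspace

theorem Set.range_smul_one_subset_centralizer {R A : Type*} [CommSemiring R] [Semiring A]
    [Algebra R A] (s : Set A) :
    Set.range (fun c : R => c • (1 : A)) ⊆ Set.centralizer s := by
  rintro _ ⟨c, rfl⟩
  show c • (1 : A) ∈ _
  rw [← Algebra.algebraMap_eq_smul_one]
  exact Set.algebraMap_mem_centralizer c

theorem StarSubalgebra.centralizer_topologicalClosure_sup_subset {R A : Type*}
    [CommSemiring R] [StarRing R] [TopologicalSpace A] [Semiring A] [StarRing A] [Algebra R A]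
    [StarModule R A] [IsTopologicalSemiring A] [ContinuousStar A]
    (S T : StarSubalgebra R A) :
    Set.centralizer ((S ⊔ T).topologicalClosure : Set A) ⊆
      Set.centralizer (S : Set A) ∩ Set.centralizer (T : Set A) :=
  Set.subset_inter
    (Set.centralizer_subset <| SetLike.coe_subset_coe.mpr <|
      le_sup_left.trans (S ⊔ T).le_topologicalClosure)
    (Set.centralizer_subset <| SetLike.coe_subset_coe.mpr <|
      le_sup_right.trans (S ⊔ T).le_topologicalClosure)

namespace VonNeumannAlgebra

variable {K : Type*} [NormedAddCommGroup K] [InnerProductSpace ℂ K] [CompleteSpace K]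

theorem isClosed (R : VonNeumannAlgebra K) : IsClosed (R : Set (K →L[ℂ] K)) :=
  R.centralizer_centralizer ▸ Set.isClosed_centralizer _

theorem centralizer_topologicalClosure_sup_commutant (R S : VonNeumannAlgebra K)
    (hirr : Set.centralizer (R : Set (K →L[ℂ] K)) ∩ (S : Set (K →L[ℂ] K))
      = Set.range (fun c : ℂ => c • (1 : K →L[ℂ] K))) :
    Set.centralizer ((R.toStarSubalgebra ⊔ S.commutant.toStarSubalgebra).topologicalClosure :
      Set (K →L[ℂ] K)) = Set.range (fun c : ℂ => c • (1 : K →L[ℂ] K)) := by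
  refine (Set.range_smul_one_subset_centralizer _).antisymm' ?_
  have h := StarSubalgebra.centralizer_topologicalClosure_sup_subset
    R.toStarSubalgebra S.commutant.toStarSubalgebra
  rwa [coe_toStarSubalgebra, coe_toStarSubalgebra, coe_commutant, S.centralizer_centralizer,
    hirr] at h

end VonNeumannAlgebra

theorem irreducible_subfactor_inclusion_from_pure_bipartite_state_general
    {K : Type*} [NormedAddCommGroup K] [InnerProductSpace ℂ K] [CompleteSpace K]
    [Nontrivial K]
    (R S : VonNeumannAlgebra K)
    (hirr : Set.centralizer (R : Set (K →L[ℂ] K)) ∩ (S : Set (K →L[ℂ] K))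
      = Set.range (fun c : ℂ => c • (1 : K →L[ℂ] K))) :
    ∃ (AA AB : StarSubalgebra ℂ (K →L[ℂ] K)),
      IsClosed (AA : Set (K →L[ℂ] K)) ∧ IsClosed (AB : Set (K →L[ℂ] K)) ∧
      (AA : Set (K →L[ℂ] K)) ⊆ (R : Set (K →L[ℂ] K)) ∧
      (AB : Set (K →L[ℂ] K)) ⊆ (S.commutant : Set (K →L[ℂ] K)) ∧
      Set.centralizer (Set.centralizer (AA : Set (K →L[ℂ] K))) = (R : Set (K →L[ℂ] K)) ∧
      Set.centralizer (Set.centralizer (AB : Set (K →L[ℂ] K)))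
        = (S.commutant : Set (K →L[ℂ] K)) ∧
      ∃ Ω : K, ‖Ω‖ = 1 ∧
        -- the vector Ω is cyclic for the C*-algebra generated by A_A and A_B, so the GNS
        -- representation of the associated vector state is the identity representation
        (Submodule.span ℂ
            ((fun T : K →L[ℂ] K => T Ω) ''
              ((AA ⊔ AB).topologicalClosure : Set (K →L[ℂ] K)))).topologicalClosure = ⊤ ∧
        -- and the generated C*-algebra acts irreducibly, i.e. the vector state is pure
        Set.centralizer (((AA ⊔ AB).topologicalClosure : StarSubalgebra ℂ (K →L[ℂ] K)) :
            Set (K →L[ℂ] K))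
          = Set.range (fun c : ℂ => c • (1 : K →L[ℂ] K)) := by
  have hirred := R.centralizer_topologicalClosure_sup_commutant S hirr
  obtain ⟨v, hv⟩ := exists_ne (0 : K)
  have hΩ : ‖‖v‖⁻¹ • v‖ = 1 := by
    rw [norm_smul, norm_inv, norm_norm, inv_mul_cancel₀ (norm_ne_zero_iff.mpr hv)]
  refine ⟨R.toStarSubalgebra, S.commutant.toStarSubalgebra, R.isClosed, S.commutant.isClosed,
    subset_rfl, subset_rfl, R.centralizer_centralizer, S.commutant.centralizer_centralizer,
    _, hΩ, ?_, hirred⟩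
  exact StarSubalgebra.cyclicSubspace_eq_top _ hirred.subset
    (smul_ne_zero (inv_ne_zero (norm_ne_zero_iff.mpr hv)) hv)

theorem irreducible_subfactor_inclusion_from_pure_bipartite_state
    {K : Type*} [NormedAddCommGroup K] [InnerProductSpace ℂ K] [CompleteSpace K]
    [Nontrivial K]
    (R S : VonNeumannAlgebra K)
    (hRS : (R : Set (K →L[ℂ] K)) ⊆ (S : Set (K →L[ℂ] K)))
    (hRfactor : ∀ x ∈ (R : Set (K →L[ℂ] K)) ∩ Set.centralizer (R : Set (K →L[ℂ] K)),
      ∃ c : ℂ, x = c • (1 : K →L[ℂ] K))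
    (hSfactor : ∀ x ∈ (S : Set (K →L[ℂ] K)) ∩ Set.centralizer (S : Set (K →L[ℂ] K)),
      ∃ c : ℂ, x = c • (1 : K →L[ℂ] K))
    (hirr : Set.centralizer (R : Set (K →L[ℂ] K)) ∩ (S : Set (K →L[ℂ] K))
      = Set.range (fun c : ℂ => c • (1 : K →L[ℂ] K))) :
    ∃ (AA AB : StarSubalgebra ℂ (K →L[ℂ] K)),
      IsClosed (AA : Set (K →L[ℂ] K)) ∧ IsClosed (AB : Set (K →L[ℂ] K)) ∧
      (AA : Set (K →L[ℂ] K)) ⊆ (R : Set (K →L[ℂ] K)) ∧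
      (AB : Set (K →L[ℂ] K)) ⊆ (S.commutant : Set (K →L[ℂ] K)) ∧
      Set.centralizer (Set.centralizer (AA : Set (K →L[ℂ] K))) = (R : Set (K →L[ℂ] K)) ∧
      Set.centralizer (Set.centralizer (AB : Set (K →L[ℂ] K)))
        = (S.commutant : Set (K →L[ℂ] K)) ∧
      ∃ Ω : K, ‖Ω‖ = 1 ∧
        -- the vector Ω is cyclic for the C*-algebra generated by A_A and A_B, so the GNS
        -- representation of the associated vector state is the identity representation
        (Submodule.span ℂ
            ((fun T : K →L[ℂ] K => T Ω) ''
              ((AA ⊔ AB).topologicalClosure : Set (K →L[ℂ] K)))).topologicalClosure = ⊤ ∧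
        -- and the generated C*-algebra acts irreducibly, i.e. the vector state is pure
        Set.centralizer (((AA ⊔ AB).topologicalClosure : StarSubalgebra ℂ (K →L[ℂ] K)) :
            Set (K →L[ℂ] K))
          = Set.range (fun c : ℂ => c • (1 : K →L[ℂ] K)) :=
  irreducible_subfactor_inclusion_from_pure_bipartite_state_general R S hirr
end

section
/- Let T : A → B(H) be a unital completely positive map with minimal Stinespring dilation T = V* π(·) V, where π : A → B(K) is a representation and [π(A)VH] = K. The map Q ↦ V* Q π(·) V is an affine, order-preserving bijection from {Q ∈ π(A)' : 0 ≤ Q ≤ 1} onto the set of completely positive maps S : A → B(H) with T − S completely positive. -/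
/- STATEMENT 9 (Arveson's Radon–Nikodym theorem for completely positive maps): Let
T : A → B(H) be unital completely positive with minimal Stinespring dilation
T = V* π(·) V.  Then Q ↦ V* Q π(·) V is an affine, order-preserving bijection from
{Q ∈ π(A)' : 0 ≤ Q ≤ 1} onto {S completely positive : T − S completely positive}. -/

open scoped ComplexOrder InnerProductSpace

/-- Complete positivity of a map from a C*-algebra into bounded operators. -/
def IsCPFun {A : Type*} [NormedRing A] [StarRing A] [NormedAlgebra ℂ A]
    {H : Type*} [NormedAddCommGroup H] [InnerProductSpace ℂ H]
    (T : A → (H →L[ℂ] H)) : Prop :=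
  ∀ (n : ℕ) (a : Fin n → A) (ξ : Fin n → H),
    0 ≤ ∑ i : Fin n, ∑ j : Fin n, ⟪ξ i, T (star (a i) * a j) (ξ j)⟫_ℂ

namespace RNAux
set_option linter.unusedSectionVars false

open ContinuousLinearMap

variable {A : Type*} [NormedRing A] [StarRing A] [CStarRing A] [NormedAlgebra ℂ A]
    [CompleteSpace A] [StarModule ℂ A] [NormedStarGroup A]
    {H : Type*} [NormedAddCommGroup H] [InnerProductSpace ℂ H] [CompleteSpace H]
    {K : Type*} [NormedAddCommGroup K] [InnerProductSpace ℂ K] [CompleteSpace K]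

local notation "conj'" => starRingEnd ℂ

/-- The `Finsupp` "linear combination" map onto the span of `π(A)V H`. -/
noncomputable def L (π : A →⋆ₐ[ℂ] (K →L[ℂ] K)) (V : H →L[ℂ] K) : ((A × H) →₀ ℂ) →ₗ[ℂ] K :=
  Finsupp.linearCombination ℂ (fun p : A × H => π p.1 (V p.2))

section Basic

variable (π : A →⋆ₐ[ℂ] (K →L[ℂ] K)) (V : H →L[ℂ] K)

lemma adj_pi (a : A) : ContinuousLinearMap.adjoint (π a) = π (star a) := by
  rw [← star_eq_adjoint, ← map_star]

lemma comm_apply {R : K →L[ℂ] K} (hR : R ∈ Set.centralizer (Set.range ⇑π)) (a : A) (x : K) :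
    R (π a x) = π a (R x) := by
  have h : π a * R = R * π a := hR (π a) ⟨a, rfl⟩
  have := ContinuousLinearMap.ext_iff.mp h x
  simpa [ContinuousLinearMap.mul_apply] using this.symm

lemma mem_cent_one : (1 : K →L[ℂ] K) ∈ Set.centralizer (Set.range ⇑π) := fun m _ => by
  rw [mul_one, one_mul]

lemma mem_cent_sub {Q Q' : K →L[ℂ] K} (h : Q ∈ Set.centralizer (Set.range ⇑π))
    (h' : Q' ∈ Set.centralizer (Set.range ⇑π)) : Q - Q' ∈ Set.centralizer (Set.range ⇑π) :=
  fun m hm => by rw [mul_sub, sub_mul, h m hm, h' m hm]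

lemma single_term {R : K →L[ℂ] K} (hR : R ∈ Set.centralizer (Set.range ⇑π)) (p q : A × H) :
    ⟪π p.1 (V p.2), R (π q.1 (V q.2))⟫_ℂ
      = ⟪p.2, (ContinuousLinearMap.adjoint V ∘L (R ∘L (π (star p.1 * q.1) ∘L V))) q.2⟫_ℂ := by
  have h1 : π p.1 (V p.2) = ContinuousLinearMap.adjoint (π (star p.1)) (V p.2) := by
    rw [adj_pi, star_star]
  have h2 : π (star p.1) (π q.1 (V q.2)) = π (star p.1 * q.1) (V q.2) := by
    rw [map_mul]; rfl
  rw [h1, adjoint_inner_left, ← comm_apply π hR, h2, ← adjoint_inner_right (A := V)]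
  rfl

lemma pos_inner {R : K →L[ℂ] K} (hpos : R.IsPositive) (y : K) : 0 ≤ ⟪y, R y⟫_ℂ := by
  rw [Complex.nonneg_iff]
  constructor
  · exact (Complex.nonneg_iff.mp (hpos.inner_nonneg_right y)).1
  · have hsa : ContinuousLinearMap.adjoint R = R := by
      rw [← star_eq_adjoint]; exact hpos.isSelfAdjoint
    have hc : conj' ⟪y, R y⟫_ℂ = ⟪y, R y⟫_ℂ := by
      rw [inner_conj_symm]
      conv_lhs => rw [← hsa]
      rw [adjoint_inner_left]
    exact (Complex.conj_eq_iff_im.mp hc).symm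

lemma inner_key {R : K →L[ℂ] K} (hR : R ∈ Set.centralizer (Set.range ⇑π))
    (n : ℕ) (a : Fin n → A) (ξ : Fin n → H) :
    ∑ i : Fin n, ∑ j : Fin n,
        ⟪ξ i, (ContinuousLinearMap.adjoint V ∘L (R ∘L (π (star (a i) * a j) ∘L V))) (ξ j)⟫_ℂ
      = ⟪∑ i : Fin n, π (a i) (V (ξ i)), R (∑ j : Fin n, π (a j) (V (ξ j)))⟫_ℂ := by
  rw [map_sum, sum_inner]
  refine Finset.sum_congr rfl fun i _ => ?_
  rw [inner_sum]
  refine Finset.sum_congr rfl fun j _ => ?_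
  exact (single_term π V hR (a i, ξ i) (a j, ξ j)).symm

end Basic

/-- The sesquilinear form associated to a map `S`. -/
noncomputable def Bf (S : A →ₗ[ℂ] (H →L[ℂ] H)) (f g : (A × H) →₀ ℂ) : ℂ :=
  f.sum fun p c => conj' c * g.sum fun q d => d * ⟪p.2, S (star p.1 * q.1) q.2⟫_ℂ

section BfLemmas

variable (S : A →ₗ[ℂ] (H →L[ℂ] H)) (π : A →⋆ₐ[ℂ] (K →L[ℂ] K)) (V : H →L[ℂ] K)

lemma inner_L_R {R : K →L[ℂ] K} (hR : R ∈ Set.centralizer (Set.range ⇑π))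
    (f g : (A × H) →₀ ℂ) :
    ⟪L π V f, R (L π V g)⟫_ℂ
      = f.sum fun p c => conj' c * g.sum fun q d =>
          d * ⟪p.2, (ContinuousLinearMap.adjoint V ∘L (R ∘L (π (star p.1 * q.1) ∘L V))) q.2⟫_ℂ := by
  rw [L, Finsupp.linearCombination_apply, Finsupp.linearCombination_apply]
  rw [Finsupp.sum, Finsupp.sum, map_sum, sum_inner, Finsupp.sum]
  refine Finset.sum_congr rfl fun p _ => ?_
  rw [inner_smul_left, inner_sum, Finsupp.sum]
  congr 1
  refine Finset.sum_congr rfl fun q _ => ?_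
  rw [map_smul, inner_smul_right, single_term π V hR p q]

lemma Bf_add_right (f g g' : (A × H) →₀ ℂ) : Bf S f (g + g') = Bf S f g + Bf S f g' := by
  unfold Bf
  rw [← Finsupp.sum_add]
  refine Finsupp.sum_congr fun p _ => ?_
  rw [Finsupp.sum_add_index' (fun q => by simp) (fun q d d' => by ring), mul_add]

lemma Bf_smul_right (c : ℂ) (f g : (A × H) →₀ ℂ) : Bf S f (c • g) = c * Bf S f g := by
  unfold Bf
  rw [Finsupp.mul_sum]
  refine Finsupp.sum_congr fun p _ => ?_
  have h : ((c • g).sum fun q d => d * ⟪p.2, S (star p.1 * q.1) q.2⟫_ℂ)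
      = c * g.sum fun q d => d * ⟪p.2, S (star p.1 * q.1) q.2⟫_ℂ := by
    rw [Finsupp.sum_smul_index' (fun q => by simp), Finsupp.mul_sum]
    refine Finsupp.sum_congr fun q _ => ?_
    rw [smul_eq_mul]; ring
  rw [h]; ring

lemma Bf_add_left (f f' g : (A × H) →₀ ℂ) : Bf S (f + f') g = Bf S f g + Bf S f' g := by
  unfold Bf
  rw [Finsupp.sum_add_index' (fun p => by simp) (fun p c c' => by rw [map_add]; ring)]

lemma Bf_smul_left (c : ℂ) (f g : (A × H) →₀ ℂ) : Bf S (c • f) g = conj' c * Bf S f g := by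
  unfold Bf
  rw [Finsupp.mul_sum]
  rw [Finsupp.sum_smul_index' (fun p => by simp)]
  refine Finsupp.sum_congr fun p _ => ?_
  rw [smul_eq_mul, map_mul]; ring

end BfLemmas

section Herm

variable (S : A →ₗ[ℂ] (H →L[ℂ] H))

lemma diag_im (hS : IsCPFun ⇑S) (b : A) (ζ : H) : (⟪ζ, S (star b * b) ζ⟫_ℂ).im = 0 := by
  have h := hS 1 ![b] ![ζ]
  simp only [Fin.sum_univ_one, Matrix.cons_val_zero] at h
  exact (Complex.nonneg_iff.mp h).2.symm

lemma herm (hS : IsCPFun ⇑S) (a : A) (ξ η : H) :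
    ⟪η, S (star a) ξ⟫_ℂ = conj' ⟪ξ, S a η⟫_ℂ := by
  have key : ∀ ξ' : H, (⟪ξ', S a η⟫_ℂ).im + (⟪η, S (star a) ξ'⟫_ℂ).im = 0 := by
    intro ξ'
    have h := hS 2 ![1, a] ![ξ', η]
    simp only [Fin.sum_univ_two, Matrix.cons_val_zero, Matrix.cons_val_one, Matrix.head_cons,
      star_one, one_mul, mul_one] at h
    have him := (Complex.nonneg_iff.mp h).2.symm
    have h1 := diag_im S hS 1 ξ'
    have h2 := diag_im S hS a η
    simp only [star_one, one_mul] at h1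
    simp only [Complex.add_im] at him
    linarith
  have k1 := key ξ
  have k2 := key ((Complex.I : ℂ) • ξ)
  rw [inner_smul_left, map_smul, inner_smul_right, Complex.conj_I] at k2
  simp only [Complex.mul_im, Complex.neg_re, Complex.neg_im, Complex.I_re, Complex.I_im] at k2
  apply Complex.ext
  · simp only [Complex.conj_re]; linarith
  · simp only [Complex.conj_im]; linarith

lemma Bf_conj_symm (hS : IsCPFun ⇑S) (f g : (A × H) →₀ ℂ) :
    conj' (Bf S g f) = Bf S f g := by
  unfold Bf
  rw [Finsupp.sum, Finsupp.sum, map_sum]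
  have step : ∀ q ∈ g.support,
      conj' (conj' (g q) * f.sum fun p c => c * ⟪q.2, S (star q.1 * p.1) p.2⟫_ℂ)
        = ∑ p ∈ f.support, conj' (f p) * (g q * ⟪p.2, S (star p.1 * q.1) q.2⟫_ℂ) := by
    intro q _
    rw [map_mul, Complex.conj_conj, Finsupp.sum, map_sum, Finset.mul_sum]
    refine Finset.sum_congr rfl fun p _ => ?_
    rw [map_mul]
    have hcc : conj' ⟪q.2, S (star q.1 * p.1) p.2⟫_ℂ = ⟪p.2, S (star p.1 * q.1) q.2⟫_ℂ := by
      rw [← herm S hS (star q.1 * p.1) q.2 p.2, star_mul, star_star]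
    rw [hcc]; ring
  rw [Finset.sum_congr rfl step, Finset.sum_comm]
  refine Finset.sum_congr rfl fun p _ => ?_
  rw [Finsupp.sum, Finset.mul_sum]

end Herm

section CpSum

variable (W : A → (H →L[ℂ] H))

/-- family of algebra elements attached to a `Finsupp`. -/
noncomputable def af (f : (A × H) →₀ ℂ) (i : Fin f.support.card) : A :=
  f ((f.support.equivFin.symm i : A × H)) • ((f.support.equivFin.symm i : A × H)).1

/-- family of vectors attached to a `Finsupp`. -/
noncomputable def xf (f : (A × H) →₀ ℂ) (i : Fin f.support.card) : H :=
  ((f.support.equivFin.symm i : A × H)).2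

lemma cpSum_f (hW : ∀ (c : ℂ) (x : A), W (c • x) = c • W x) (f : (A × H) →₀ ℂ) :
    ∑ i : Fin f.support.card, ∑ j : Fin f.support.card,
        ⟪xf f i, W (star (af f i) * af f j) (xf f j)⟫_ℂ
      = f.sum fun p c => conj' c * f.sum fun q d => d * ⟪p.2, W (star p.1 * q.1) q.2⟫_ℂ := by
  classical
  set e := f.support.equivFin.symm with he
  have term : ∀ i j, ⟪xf f i, W (star (af f i) * af f j) (xf f j)⟫_ℂ
      = conj' (f (e i)) * ((f (e j)) *
          ⟪((e i : A × H)).2, W (star ((e i : A × H)).1 * ((e j : A × H)).1) (((e j : A × H)).2)⟫_ℂ) := by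
    intro i j
    unfold af xf
    rw [← he, star_smul, smul_mul_smul_comm, hW, ContinuousLinearMap.smul_apply,
      inner_smul_right, Complex.star_def]
    ring
  rw [Finset.sum_congr rfl fun i _ => Finset.sum_congr rfl fun j _ => term i j]
  have inner_eq : ∀ p : A × H,
      (∑ j : Fin f.support.card, (f (e j)) *
          ⟪p.2, W (star p.1 * ((e j : A × H)).1) (((e j : A × H)).2)⟫_ℂ)
        = f.sum fun q d => d * ⟪p.2, W (star p.1 * q.1) q.2⟫_ℂ := by
    intro p
    rw [Finsupp.sum, ← Finset.sum_coe_sort f.support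
      (fun q => f q * ⟪p.2, W (star p.1 * q.1) q.2⟫_ℂ)]
    exact Equiv.sum_comp e (fun q : f.support => f q * ⟪p.2, W (star p.1 * (q : A × H).1) (q : A × H).2⟫_ℂ)
  have outer : ∀ i : Fin f.support.card,
      (∑ j : Fin f.support.card, conj' (f (e i)) * ((f (e j)) *
          ⟪((e i : A × H)).2, W (star ((e i : A × H)).1 * ((e j : A × H)).1) (((e j : A × H)).2)⟫_ℂ))
        = conj' (f (e i)) * f.sum fun q d => d * ⟪((e i : A × H)).2, W (star ((e i : A × H)).1 * q.1) q.2⟫_ℂ := by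
    intro i
    rw [← Finset.mul_sum, inner_eq ((e i : A × H))]
  rw [Finset.sum_congr rfl fun i _ => outer i]
  rw [Finsupp.sum, ← Finset.sum_coe_sort f.support
    (fun p => conj' (f p) * f.sum fun q d => d * ⟪p.2, W (star p.1 * q.1) q.2⟫_ℂ)]
  exact Equiv.sum_comp e (fun p : f.support =>
    conj' (f p) * f.sum fun q d => d * ⟪(p : A × H).2, W (star (p : A × H).1 * q.1) q.2⟫_ℂ)

end CpSum

section CP

variable (π : A →⋆ₐ[ℂ] (K →L[ℂ] K)) (V : H →L[ℂ] K)

lemma smul_compat (R : K →L[ℂ] K) : ∀ (c : ℂ) (x : A),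
    ContinuousLinearMap.adjoint V ∘L (R ∘L (π (c • x) ∘L V))
      = c • (ContinuousLinearMap.adjoint V ∘L (R ∘L (π x ∘L V))) := by
  intro c x
  rw [map_smul]
  simp only [ContinuousLinearMap.smul_comp, ContinuousLinearMap.comp_smul]

lemma cp_of_comm_pos {R : K →L[ℂ] K} (hR : R ∈ Set.centralizer (Set.range ⇑π))
    (hpos : R.IsPositive) :
    IsCPFun (fun a : A => ContinuousLinearMap.adjoint V ∘L (R ∘L (π a ∘L V))) := by
  intro n a ξ
  exact le_of_le_of_eq (pos_inner hpos _) (inner_key π V hR n a ξ).symm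

lemma quad_eq {R : K →L[ℂ] K} (hR : R ∈ Set.centralizer (Set.range ⇑π))
    (f : (A × H) →₀ ℂ) :
    ∑ i : Fin f.support.card, ∑ j : Fin f.support.card,
        ⟪xf f i, (ContinuousLinearMap.adjoint V ∘L
          (R ∘L (π (star (af f i) * af f j) ∘L V))) (xf f j)⟫_ℂ
      = ⟪L π V f, R (L π V f)⟫_ℂ :=
  (cpSum_f (fun a : A => ContinuousLinearMap.adjoint V ∘L (R ∘L (π a ∘L V)))
      (smul_compat π V R) f).trans (inner_L_R π V hR f f).symm

lemma quad_nonneg {R : K →L[ℂ] K} (hR : R ∈ Set.centralizer (Set.range ⇑π))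
    (hcp : IsCPFun (fun a : A => ContinuousLinearMap.adjoint V ∘L (R ∘L (π a ∘L V))))
    (f : (A × H) →₀ ℂ) : 0 ≤ ⟪L π V f, R (L π V f)⟫_ℂ :=
  le_of_le_of_eq (hcp _ (af f) (xf f)) (quad_eq π V hR f)

lemma Bf_self_nonneg (S : A →ₗ[ℂ] (H →L[ℂ] H)) (hS : IsCPFun ⇑S) (f : (A × H) →₀ ℂ) :
    0 ≤ Bf S f f :=
  le_of_le_of_eq (hS _ (af f) (xf f)) (cpSum_f ⇑S (map_smul S) f)

end CP

section Dense

variable (π : A →⋆ₐ[ℂ] (K →L[ℂ] K)) (V : H →L[ℂ] K)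

lemma L_mapDomain (a : A) (g : (A × H) →₀ ℂ) :
    π a (L π V g) = L π V (g.mapDomain fun q => (a * q.1, q.2)) := by
  rw [L, Finsupp.linearCombination_mapDomain, Finsupp.linearCombination_apply,
    Finsupp.linearCombination_apply, map_finsuppSum]
  refine Finsupp.sum_congr fun q _ => ?_
  rw [map_smul]
  congr 1
  show π a (π q.1 (V q.2)) = π (a * q.1) (V q.2)
  rw [map_mul]; rfl

lemma Bf_mapDomain (S : A →ₗ[ℂ] (H →L[ℂ] H)) (a : A) (f g : (A × H) →₀ ℂ) :
    Bf S (f.mapDomain fun p => (star a * p.1, p.2)) g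
      = Bf S f (g.mapDomain fun q => (a * q.1, q.2)) := by
  unfold Bf
  rw [Finsupp.sum_mapDomain_index (fun p => by simp) (fun p c c' => by rw [map_add]; ring)]
  refine Finsupp.sum_congr fun p _ => ?_
  rw [Finsupp.sum_mapDomain_index (fun q => by simp) (fun q d d' => by ring)]
  congr 1
  refine Finsupp.sum_congr fun q _ => ?_
  congr 2
  rw [star_mul, star_star, mul_assoc]

lemma eq_zero_of_inner_L (hdense : Dense ((LinearMap.range (L π V) : Submodule ℂ K) : Set K)) (z : K) (h : ∀ g, ⟪z, L π V g⟫_ℂ = 0) : z = 0 := by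
  have hfun : InnerProductSpace.toDual ℂ K z = 0 := by
    apply ContinuousLinearMap.ext_on (s := ((LinearMap.range (L π V) : Submodule ℂ K) : Set K))
    · rwa [Submodule.span_eq]
    · rintro y ⟨g, rfl⟩
      simpa [InnerProductSpace.toDual_apply_apply] using h g
  have := congrArg (InnerProductSpace.toDual ℂ K).symm hfun
  simpa using this

lemma eq_zero_of_inner_L' (hdense : Dense ((LinearMap.range (L π V) : Submodule ℂ K) : Set K)) (z : K) (h : ∀ f, ⟪L π V f, z⟫_ℂ = 0) : z = 0 := by
  refine eq_zero_of_inner_L π V hdense z fun g => ?_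
  rw [← inner_conj_symm, h g, map_zero]

lemma ext_L (hdense : Dense ((LinearMap.range (L π V) : Submodule ℂ K) : Set K)) {R R' : K →L[ℂ] K}
    (h : ∀ f g, ⟪L π V f, R (L π V g)⟫_ℂ = ⟪L π V f, R' (L π V g)⟫_ℂ) : R = R' := by
  have hy : ∀ g, R (L π V g) = R' (L π V g) := by
    intro g
    have : ∀ f, ⟪L π V f, R (L π V g) - R' (L π V g)⟫_ℂ = 0 := by
      intro f; rw [inner_sub_right, h f g, sub_self]
    have := eq_zero_of_inner_L' π V hdense _ this
    exact sub_eq_zero.mp this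
  apply ContinuousLinearMap.ext_on (s := ((LinearMap.range (L π V) : Submodule ℂ K) : Set K))
  · rwa [Submodule.span_eq]
  · rintro y ⟨g, rfl⟩
    exact hy g

lemma pos_of_dense (hdense : Dense ((LinearMap.range (L π V) : Submodule ℂ K) : Set K)) {R : K →L[ℂ] K} (hsa : IsSelfAdjoint R)
    (h : ∀ f, 0 ≤ ⟪L π V f, R (L π V f)⟫_ℂ) : R.IsPositive := by
  refine ⟨hsa.isSymmetric, fun x => ?_⟩
  have hC : IsClosed {y : K | 0 ≤ (⟪R y, y⟫_ℂ).re} := by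
    apply isClosed_le continuous_const
    exact Complex.continuous_re.comp (Continuous.inner (R.continuous) continuous_id)
  have hsub : ((LinearMap.range (L π V) : Submodule ℂ K) : Set K) ⊆ {y | 0 ≤ (⟪R y, y⟫_ℂ).re} := by
    rintro y ⟨f, rfl⟩
    have h1 := (Complex.nonneg_iff.mp (h f)).1
    have h2 : ⟪R (L π V f), L π V f⟫_ℂ = conj' ⟪L π V f, R (L π V f)⟫_ℂ :=
      (inner_conj_symm _ _).symm
    simp only [Set.mem_setOf_eq, h2, Complex.conj_re]
    exact h1
  have hx : x ∈ {y : K | 0 ≤ (⟪R y, y⟫_ℂ).re} := by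
    have hcl : closure ((LinearMap.range (L π V) : Submodule ℂ K) : Set K)
        ⊆ {y | 0 ≤ (⟪R y, y⟫_ℂ).re} := closure_minimal hsub hC
    rw [hdense.closure_eq] at hcl
    exact hcl (Set.mem_univ x)
  simpa [ContinuousLinearMap.reApplyInnerSelf_apply, RCLike.re_to_complex] using hx

lemma inner_L_of_rep (S : A →ₗ[ℂ] (H →L[ℂ] H)) {Q : K →L[ℂ] K}
    (hQ : Q ∈ Set.centralizer (Set.range ⇑π))
    (hrep : ∀ a : A, S a = ContinuousLinearMap.adjoint V ∘L (Q ∘L (π a ∘L V)))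
    (f g : (A × H) →₀ ℂ) : ⟪L π V f, Q (L π V g)⟫_ℂ = Bf S f g := by
  rw [inner_L_R π V hQ f g]
  unfold Bf
  refine Finsupp.sum_congr fun p _ => ?_
  congr 1
  refine Finsupp.sum_congr fun q _ => ?_
  rw [hrep]

end Dense

section Exists

variable (π : A →⋆ₐ[ℂ] (K →L[ℂ] K)) (V : H →L[ℂ] K)
variable (T S : A →ₗ[ℂ] (H →L[ℂ] H))

lemma Bf_le_inner (hdil : ∀ a : A, T a = ContinuousLinearMap.adjoint V ∘L (π a ∘L V))
    (hTS : IsCPFun (fun a : A => T a - S a)) (f : (A × H) →₀ ℂ) :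
    Bf S f f ≤ ⟪L π V f, L π V f⟫_ℂ := by
  have h := hTS _ (af f) (xf f)
  have hsplit : ∀ i j : Fin f.support.card,
      ⟪xf f i, (T (star (af f i) * af f j) - S (star (af f i) * af f j)) (xf f j)⟫_ℂ
        = ⟪xf f i, T (star (af f i) * af f j) (xf f j)⟫_ℂ
          - ⟪xf f i, S (star (af f i) * af f j) (xf f j)⟫_ℂ := by
    intro i j
    rw [ContinuousLinearMap.sub_apply, inner_sub_right]
  rw [Finset.sum_congr rfl fun i _ => Finset.sum_congr rfl fun j _ => hsplit i j] at h
  simp only [Finset.sum_sub_distrib] at h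
  have hT : ∑ i : Fin f.support.card, ∑ j : Fin f.support.card,
      ⟪xf f i, T (star (af f i) * af f j) (xf f j)⟫_ℂ = ⟪L π V f, L π V f⟫_ℂ := by
    have hT1 : ∀ x : A, T x = ContinuousLinearMap.adjoint V ∘L
        ((1 : K →L[ℂ] K) ∘L (π x ∘L V)) := by
      intro x; rw [hdil x]; ext y; rfl
    rw [Finset.sum_congr rfl fun i _ => Finset.sum_congr rfl fun j _ => by rw [hT1]]
    exact (quad_eq π V (mem_cent_one π) f).trans (by rw [ContinuousLinearMap.one_apply])
  have hSsum : ∑ i : Fin f.support.card, ∑ j : Fin f.support.card,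
      ⟪xf f i, S (star (af f i) * af f j) (xf f j)⟫_ℂ = Bf S f f :=
    cpSum_f ⇑S (map_smul S) f
  rw [hT, hSsum] at h
  exact sub_nonneg.mp h

lemma Bf_bound (hS : IsCPFun ⇑S)
    (hdil : ∀ a : A, T a = ContinuousLinearMap.adjoint V ∘L (π a ∘L V))
    (hTS : IsCPFun (fun a : A => T a - S a)) (f g : (A × H) →₀ ℂ) :
    ‖Bf S f g‖ ≤ ‖L π V f‖ * ‖L π V g‖ := by
  letI core : PreInnerProductSpace.Core ℂ ((A × H) →₀ ℂ) :=
    { inner := Bf S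
      conj_inner_symm := fun x y => Bf_conj_symm S hS x y
      re_inner_nonneg := fun x => by
        simpa [RCLike.re_to_complex] using (Complex.nonneg_iff.mp (Bf_self_nonneg S hS x)).1
      add_left := fun x y z => Bf_add_left S x y z
      smul_left := fun x y r => Bf_smul_left S r x y }
  have hCS : ‖Bf S f g‖ * ‖Bf S g f‖ ≤ RCLike.re (Bf S f f) * RCLike.re (Bf S g g) :=
    InnerProductSpace.Core.inner_mul_inner_self_le (𝕜 := ℂ) f g
  have hnorm : ‖Bf S g f‖ = ‖Bf S f g‖ := by
    rw [← Bf_conj_symm S hS f g, RCLike.norm_conj]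
  rw [hnorm] at hCS
  have hff : RCLike.re (Bf S f f) ≤ ‖L π V f‖ ^ 2 := by
    have := (Complex.le_def.mp (Bf_le_inner π V T S hdil hTS f)).1
    rw [← @inner_self_eq_norm_sq ℂ]
    simpa [RCLike.re_to_complex] using this
  have hgg : RCLike.re (Bf S g g) ≤ ‖L π V g‖ ^ 2 := by
    have := (Complex.le_def.mp (Bf_le_inner π V T S hdil hTS g)).1
    rw [← @inner_self_eq_norm_sq ℂ]
    simpa [RCLike.re_to_complex] using this
  have hffnn : 0 ≤ RCLike.re (Bf S f f) := by
    simpa [RCLike.re_to_complex] using (Complex.nonneg_iff.mp (Bf_self_nonneg S hS f)).1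
  have hggnn : 0 ≤ RCLike.re (Bf S g g) := by
    simpa [RCLike.re_to_complex] using (Complex.nonneg_iff.mp (Bf_self_nonneg S hS g)).1
  nlinarith [norm_nonneg (Bf S f g), norm_nonneg (L π V f), norm_nonneg (L π V g),
    mul_nonneg (norm_nonneg (L π V f)) (norm_nonneg (L π V g))]

lemma exists_Q (hS : IsCPFun ⇑S)
    (hdil : ∀ a : A, T a = ContinuousLinearMap.adjoint V ∘L (π a ∘L V))
    (hTS : IsCPFun (fun a : A => T a - S a))
    (hdense : Dense ((LinearMap.range (L π V) : Submodule ℂ K) : Set K)) :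
    ∃ Q : K →L[ℂ] K, Q ∈ Set.centralizer (Set.range ⇑π) ∧ Q.IsPositive ∧
      (1 - Q).IsPositive ∧
      ∀ a : A, S a = ContinuousLinearMap.adjoint V ∘L (Q ∘L (π a ∘L V)) := by
  classical
  set Lm := L π V with hLm
  set M : Submodule ℂ K := LinearMap.range Lm with hM
  -- kernel of Lm is contained in kernel of the form
  have hker : ∀ f : (A × H) →₀ ℂ, Lm f = 0 → ∀ g, Bf S f g = 0 := by
    intro f hf g
    have := Bf_bound π V T S hS hdil hTS f g
    rw [hf, norm_zero, zero_mul] at this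
    exact norm_le_zero_iff.mp this
  have hker' : ∀ f : (A × H) →₀ ℂ, Lm f = 0 → ∀ g, Bf S g f = 0 := by
    intro f hf g
    rw [← Bf_conj_symm S hS g f, hker f hf g, map_zero]
  -- dense range and uniform inducing for the inclusion of M
  have hDR : DenseRange ⇑M.subtypeL := by
    show Dense (Set.range ⇑M.subtypeL)
    rw [show Set.range ⇑M.subtypeL = (M : Set K) from Subtype.range_coe]
    exact hdense
  have hUI : IsUniformInducing ⇑M.subtypeL := isometry_subtype_coe.isUniformInducing
  -- the linear functional attached to f
  have main : ∀ f : (A × H) →₀ ℂ, ∃ z : K, ‖z‖ ≤ ‖Lm f‖ ∧ ∀ g, ⟪z, Lm g⟫_ℂ = Bf S f g := by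
    intro f
    let Blin : ((A × H) →₀ ℂ) →ₗ[ℂ] ℂ :=
      { toFun := fun g => Bf S f g
        map_add' := fun g g' => Bf_add_right S f g g'
        map_smul' := fun c g => Bf_smul_right S c f g }
    have hkerB : LinearMap.ker Lm ≤ LinearMap.ker Blin := by
      intro g hg
      exact LinearMap.mem_ker.mpr (hker' g (LinearMap.mem_ker.mp hg) f)
    let ψ₀ : M →ₗ[ℂ] ℂ :=
      ((LinearMap.ker Lm).liftQ Blin hkerB).comp
        (LinearMap.quotKerEquivRange Lm).symm.toLinearMap
    have hψ₀ : ∀ (g : (A × H) →₀ ℂ) (hm : Lm g ∈ M), ψ₀ ⟨Lm g, hm⟩ = Bf S f g := by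
      intro g hm
      have hq : (LinearMap.quotKerEquivRange Lm).symm ⟨Lm g, hm⟩
          = (LinearMap.ker Lm).mkQ g := Lm.quotKerEquivRange_symm_apply_image g hm
      show ((LinearMap.ker Lm).liftQ Blin hkerB) ((LinearMap.quotKerEquivRange Lm).symm ⟨Lm g, hm⟩) = _
      rw [hq]
      rfl
    have hb : ∀ m : M, ‖ψ₀ m‖ ≤ ‖Lm f‖ * ‖m‖ := by
      rintro ⟨y, hy⟩
      obtain ⟨g, rfl⟩ := hy
      rw [hψ₀ g (LinearMap.mem_range_self _ g)]
      have : ‖(⟨Lm g, LinearMap.mem_range_self _ g⟩ : M)‖ = ‖Lm g‖ := rfl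
      rw [this]
      exact Bf_bound π V T S hS hdil hTS f g
    let ψ : M →L[ℂ] ℂ := LinearMap.mkContinuous ψ₀ ‖Lm f‖ hb
    let φ : K →L[ℂ] ℂ := ψ.extend M.subtypeL
    have hφ : ∀ g, φ (Lm g) = Bf S f g := by
      intro g
      have h1 : M.subtypeL ⟨Lm g, LinearMap.mem_range_self _ g⟩ = Lm g := rfl
      have := ContinuousLinearMap.extend_eq ψ hDR hUI
        ⟨Lm g, LinearMap.mem_range_self _ g⟩
      rw [h1] at this
      rw [this]
      exact hψ₀ g (LinearMap.mem_range_self _ g)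
    have hφn : ‖φ‖ ≤ ‖Lm f‖ := by
      have h1 : ∀ m : M, ‖m‖ ≤ (1 : NNReal) * ‖M.subtypeL m‖ := fun m => by
        rw [NNReal.coe_one, one_mul]; rfl
      have h2 := ContinuousLinearMap.opNorm_extend_le ψ hDR h1
      have h3 : ‖ψ‖ ≤ ‖Lm f‖ := LinearMap.mkContinuous_norm_le ψ₀ (norm_nonneg _) hb
      calc ‖φ‖ ≤ (1 : NNReal) * ‖ψ‖ := h2
        _ = ‖ψ‖ := by rw [NNReal.coe_one, one_mul]
        _ ≤ ‖Lm f‖ := h3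
    refine ⟨(InnerProductSpace.toDual ℂ K).symm φ, ?_, ?_⟩
    · rw [LinearIsometryEquiv.norm_map]
      exact hφn
    · intro g
      rw [InnerProductSpace.toDual_symm_apply]
      exact hφ g

  choose w hwn hwB using main
  -- w is linear and kills the kernel of Lm
  have hwadd : ∀ f f', w (f + f') = w f + w f' := by
    intro f f'
    have : ∀ g, ⟪w (f + f') - (w f + w f'), Lm g⟫_ℂ = 0 := by
      intro g
      rw [inner_sub_left, inner_add_left, hwB, hwB, hwB, Bf_add_left, sub_self]
    exact sub_eq_zero.mp (eq_zero_of_inner_L π V hdense _ this)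
  have hwsmul : ∀ (c : ℂ) f, w (c • f) = c • w f := by
    intro c f
    have : ∀ g, ⟪w (c • f) - c • w f, Lm g⟫_ℂ = 0 := by
      intro g
      rw [inner_sub_left, inner_smul_left, hwB, hwB, Bf_smul_left, sub_self]
    exact sub_eq_zero.mp (eq_zero_of_inner_L π V hdense _ this)
  let Wlin : ((A × H) →₀ ℂ) →ₗ[ℂ] K :=
    { toFun := w
      map_add' := hwadd
      map_smul' := hwsmul }
  have hkerW : LinearMap.ker Lm ≤ LinearMap.ker Wlin := by
    intro f hf
    show w f = 0
    refine eq_zero_of_inner_L π V hdense _ fun g => ?_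
    rw [hwB, hker f (LinearMap.mem_ker.mp hf) g]
  let Q₀ : M →ₗ[ℂ] K :=
    ((LinearMap.ker Lm).liftQ Wlin hkerW).comp
      (LinearMap.quotKerEquivRange Lm).symm.toLinearMap
  have hQ₀ : ∀ (g : (A × H) →₀ ℂ) (hm : Lm g ∈ M), Q₀ ⟨Lm g, hm⟩ = w g := by
    intro g hm
    have hq : (LinearMap.quotKerEquivRange Lm).symm ⟨Lm g, hm⟩
        = (LinearMap.ker Lm).mkQ g := Lm.quotKerEquivRange_symm_apply_image g hm
    show ((LinearMap.ker Lm).liftQ Wlin hkerW) ((LinearMap.quotKerEquivRange Lm).symm ⟨Lm g, hm⟩) = _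
    rw [hq]
    rfl
  have hQ₀b : ∀ m : M, ‖Q₀ m‖ ≤ 1 * ‖m‖ := by
    rintro ⟨y, hy⟩
    obtain ⟨g, rfl⟩ := hy
    rw [hQ₀ g (LinearMap.mem_range_self _ g), one_mul]
    exact hwn g
  let Qmid : M →L[ℂ] K := LinearMap.mkContinuous Q₀ 1 hQ₀b
  let Qhat : K →L[ℂ] K := Qmid.extend M.subtypeL
  have hQapp : ∀ g, Qhat (Lm g) = w g := by
    intro g
    have h1 : M.subtypeL ⟨Lm g, LinearMap.mem_range_self _ g⟩ = Lm g := rfl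
    have := ContinuousLinearMap.extend_eq Qmid hDR hUI
      ⟨Lm g, LinearMap.mem_range_self _ g⟩
    rw [h1] at this
    rw [this]
    exact hQ₀ g (LinearMap.mem_range_self _ g)
  have hQkey : ∀ f g, ⟪Lm f, Qhat (Lm g)⟫_ℂ = Bf S f g := by
    intro f g
    rw [hQapp g, ← inner_conj_symm, hwB, Bf_conj_symm S hS]
  -- self-adjointness
  have hsa : IsSelfAdjoint Qhat := by
    have : ContinuousLinearMap.adjoint Qhat = Qhat := by
      refine ext_L π V hdense fun f g => ?_
      rw [ContinuousLinearMap.adjoint_inner_right, ← inner_conj_symm, hQkey,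
        Bf_conj_symm S hS, hQkey]
    rw [IsSelfAdjoint, ContinuousLinearMap.star_eq_adjoint]
    exact this
  -- positivity
  have hpos : Qhat.IsPositive := by
    refine pos_of_dense π V hdense hsa fun f => ?_
    rw [hQkey f f]
    exact Bf_self_nonneg S hS f
  have hpos1 : (1 - Qhat).IsPositive := by
    have hsa1 : IsSelfAdjoint ((1 : K →L[ℂ] K) - Qhat) := (IsSelfAdjoint.one (K →L[ℂ] K)).sub hsa
    refine pos_of_dense π V hdense hsa1 fun f => ?_
    rw [ContinuousLinearMap.sub_apply, inner_sub_right, hQkey f f,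
      ContinuousLinearMap.one_apply]
    exact sub_nonneg.mpr (Bf_le_inner π V T S hdil hTS f)
  -- commutation
  have hcent : Qhat ∈ Set.centralizer (Set.range ⇑π) := by
    rintro m ⟨a, rfl⟩
    have hcomp : π a ∘L Qhat = Qhat ∘L π a := by
      refine ext_L π V hdense fun f g => ?_
      have lhs : ⟪Lm f, (π a ∘L Qhat) (Lm g)⟫_ℂ
          = Bf S (f.mapDomain fun p => (star a * p.1, p.2)) g := by
        rw [ContinuousLinearMap.comp_apply]
        have h1 : ⟪Lm f, π a (Qhat (Lm g))⟫_ℂ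
            = ⟪ContinuousLinearMap.adjoint (π a) (Lm f), Qhat (Lm g)⟫_ℂ :=
          (ContinuousLinearMap.adjoint_inner_left (π a) (Qhat (Lm g)) (Lm f)).symm
        rw [h1, adj_pi, L_mapDomain π V (star a) f, hQkey]
      have rhs : ⟪Lm f, (Qhat ∘L π a) (Lm g)⟫_ℂ
          = Bf S f (g.mapDomain fun q => (a * q.1, q.2)) := by
        rw [ContinuousLinearMap.comp_apply, L_mapDomain π V a g, hQkey]
      rw [lhs, rhs, Bf_mapDomain]
    exact hcomp
  -- S is represented by Qhat
  have hrep : ∀ a : A, S a = ContinuousLinearMap.adjoint V ∘L (Qhat ∘L (π a ∘L V)) := by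
    intro a
    ext η
    apply ext_inner_left ℂ
    intro ξ
    have hf := hQkey (Finsupp.single ((1 : A), ξ) (1 : ℂ)) (Finsupp.single ((a, η)) (1 : ℂ))
    have hLf : Lm (Finsupp.single ((1 : A), ξ) (1 : ℂ)) = V ξ := by
      rw [hLm, L, Finsupp.linearCombination_single, one_smul]
      show π 1 (V ξ) = V ξ
      rw [map_one]; rfl
    have hLg : Lm (Finsupp.single ((a, η)) (1 : ℂ)) = π a (V η) := by
      rw [hLm, L, Finsupp.linearCombination_single, one_smul]
    have hBf : Bf S (Finsupp.single ((1 : A), ξ) (1 : ℂ)) (Finsupp.single ((a, η)) (1 : ℂ))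
        = ⟪ξ, S a η⟫_ℂ := by
      unfold Bf
      rw [Finsupp.sum_single_index (by simp), Finsupp.sum_single_index (by simp)]
      simp [star_one, one_mul]
    rw [hLf, hLg, hBf] at hf
    rw [← hf]
    show ⟪V ξ, Qhat (π a (V η))⟫_ℂ = ⟪ξ, ContinuousLinearMap.adjoint V (Qhat (π a (V η)))⟫_ℂ
    rw [ContinuousLinearMap.adjoint_inner_right]
  exact ⟨Qhat, hcent, hpos, hpos1, hrep⟩

end Exists

end RNAux


open RNAux in
theorem radon_nikodym_for_cp_maps
    {A : Type*} [NormedRing A] [StarRing A] [CStarRing A] [NormedAlgebra ℂ A]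
    [CompleteSpace A] [StarModule ℂ A] [NormedStarGroup A]
    {H : Type*} [NormedAddCommGroup H] [InnerProductSpace ℂ H] [CompleteSpace H]
    {K : Type*} [NormedAddCommGroup K] [InnerProductSpace ℂ K] [CompleteSpace K]
    (T : A →ₗ[ℂ] (H →L[ℂ] H)) (hTcp : IsCPFun ⇑T) (hT1 : T 1 = 1)
    -- minimal Stinespring dilation T = V* π(·) V with [π(A)VH] = K
    (π : A →⋆ₐ[ℂ] (K →L[ℂ] K)) (V : H →L[ℂ] K)
    (hV : ∀ ξ : H, ‖V ξ‖ = ‖ξ‖)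
    (hdil : ∀ a : A, T a = ContinuousLinearMap.adjoint V ∘L (π a ∘L V))
    (hmin : (Submodule.span ℂ {y : K | ∃ (a : A) (ξ : H), y = π a (V ξ)}).topologicalClosure
      = ⊤) :
    -- well-definedness: each Q in [0,1] of π(A)' gives an S with 0 ≤_cp S ≤_cp T
    (∀ Q : K →L[ℂ] K, Q ∈ Set.centralizer (Set.range ⇑π) →
      Q.IsPositive → (1 - Q).IsPositive →
      IsCPFun (fun a : A => ContinuousLinearMap.adjoint V ∘L (Q ∘L (π a ∘L V))) ∧
        IsCPFun (fun a : A =>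
          T a - ContinuousLinearMap.adjoint V ∘L (Q ∘L (π a ∘L V)))) ∧
    -- bijectivity: every completely positive S with T − S completely positive arises from
    -- a unique such Q
    (∀ S : A →ₗ[ℂ] (H →L[ℂ] H), IsCPFun ⇑S → IsCPFun (fun a : A => T a - S a) →
      ∃! Q : K →L[ℂ] K, Q ∈ Set.centralizer (Set.range ⇑π) ∧
        Q.IsPositive ∧ (1 - Q).IsPositive ∧
        ∀ a : A, S a = ContinuousLinearMap.adjoint V ∘L (Q ∘L (π a ∘L V))) ∧
    -- order preservation in both directions
    (∀ Q Q' : K →L[ℂ] K, Q ∈ Set.centralizer (Set.range ⇑π) →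
      Q' ∈ Set.centralizer (Set.range ⇑π) →
      Q.IsPositive → (1 - Q).IsPositive → Q'.IsPositive → (1 - Q').IsPositive →
      ((Q' - Q).IsPositive ↔
        IsCPFun (fun a : A => ContinuousLinearMap.adjoint V ∘L ((Q' - Q) ∘L (π a ∘L V))))) ∧
    -- affineness
    (∀ (s : ℝ), 0 ≤ s → s ≤ 1 → ∀ Q Q' : K →L[ℂ] K, ∀ a : A,
      ContinuousLinearMap.adjoint V ∘L
          ((((s : ℂ) • Q + ((1 - s : ℝ) : ℂ) • Q') : K →L[ℂ] K) ∘L (π a ∘L V))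
        = (s : ℂ) • (ContinuousLinearMap.adjoint V ∘L (Q ∘L (π a ∘L V)))
          + ((1 - s : ℝ) : ℂ) • (ContinuousLinearMap.adjoint V ∘L (Q' ∘L (π a ∘L V)))) := by
  have hdense : Dense ((LinearMap.range (L π V) : Submodule ℂ K) : Set K) := by
    have hset : {y : K | ∃ (a : A) (ξ : H), y = π a (V ξ)}
        = Set.range (fun p : A × H => π p.1 (V p.2)) := by
      ext y
      constructor
      · rintro ⟨a, ξ, h⟩; exact ⟨(a, ξ), h.symm⟩
      · rintro ⟨p, h⟩; exact ⟨p.1, p.2, h.symm⟩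
    have hrange : LinearMap.range (L π V)
        = Submodule.span ℂ {y : K | ∃ (a : A) (ξ : H), y = π a (V ξ)} := by
      rw [L, Finsupp.range_linearCombination, hset]
    rw [hrange]
    exact Submodule.dense_iff_topologicalClosure_eq_top.mpr hmin
  refine ⟨?_, ?_, ?_, ?_⟩
  · -- well-definedness
    intro Q hQ hpos hpos1
    constructor
    · exact cp_of_comm_pos π V hQ hpos
    · have heq : (fun a : A =>
          T a - ContinuousLinearMap.adjoint V ∘L (Q ∘L (π a ∘L V)))
          = fun a : A => ContinuousLinearMap.adjoint V ∘L ((1 - Q) ∘L (π a ∘L V)) := by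
        funext a
        rw [hdil a]
        ext x
        simp [ContinuousLinearMap.sub_apply, ContinuousLinearMap.comp_apply,
          ContinuousLinearMap.one_apply, map_sub]
      rw [heq]
      exact cp_of_comm_pos π V (mem_cent_sub π (mem_cent_one π) hQ) hpos1
  · -- bijectivity
    intro S hScp hTScp
    obtain ⟨Q, hcent, hpos, hpos1, hrep⟩ := exists_Q π V T S hScp hdil hTScp hdense
    refine ⟨Q, ⟨hcent, hpos, hpos1, hrep⟩, ?_⟩
    rintro Q' ⟨hcent', _, _, hrep'⟩
    refine ext_L π V hdense fun f g => ?_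
    rw [inner_L_of_rep π V S hcent' hrep' f g, inner_L_of_rep π V S hcent hrep f g]
  · -- order preservation
    intro Q Q' hQ hQ' hposQ hposQ1 hposQ' hposQ1'
    constructor
    · intro hpos
      exact cp_of_comm_pos π V (mem_cent_sub π hQ' hQ) hpos
    · intro hcp
      refine pos_of_dense π V hdense
        ((hposQ'.isSelfAdjoint).sub (hposQ.isSelfAdjoint)) fun f => ?_
      exact quad_nonneg π V (mem_cent_sub π hQ' hQ) hcp f
  · -- affineness
    intro s _ _ Q Q' a
    ext x
    simp [ContinuousLinearMap.add_comp, ContinuousLinearMap.comp_add,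
      ContinuousLinearMap.smul_comp, ContinuousLinearMap.comp_smul]
end

section
/- Let ω be a state on a bipartite algebra A with marginal ω_A on A_A, and let V : H_{ω_A} → H_ω be the isometry induced by the inclusion A_A ↪ A. Then T_B(b) := V* π_ω(b) V, for b ∈ A_B, defines a unital completely positive map T_B : A_B → B(H_{ω_A}) whose range lies in the commutant π_{ω_A}(A_A)', and it satisfies ω(ab) = ⟨Ω_{ω_A}, π_{ω_A}(a) T_B(b) Ω_{ω_A}⟩ for all a ∈ A_A, b ∈ A_B. Moreover T_B is the unique such map with range in the commutant. -/
/- STATEMENT 13 ("Bob joins Alice's GNS space"): For a state ω on a bipartite algebra with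
marginal ω_A and isometry V : H_{ω_A} → H_ω induced by the inclusion A_A ↪ A, the map
T_B(b) := V* π_ω(b) V (b ∈ A_B) is the unique unital completely positive map into the
commutant π_{ω_A}(A_A)' satisfying ω(ab) = ⟨Ω_{ω_A}, π_{ω_A}(a) T_B(b) Ω_{ω_A}⟩. -/

open scoped ComplexOrder InnerProductSpace

/-- Two continuous linear maps agreeing on a set whose span is dense are equal. -/
private lemma clm_ext_of_dense_span {E F : Type*} [NormedAddCommGroup E] [InnerProductSpace ℂ E]
    [NormedAddCommGroup F] [InnerProductSpace ℂ F]
    {s : Set E} (hs : (Submodule.span ℂ s).topologicalClosure = ⊤)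
    (f g : E →L[ℂ] F) (h : ∀ x ∈ s, f x = g x) : f = g := by
  have hd : Dense (Submodule.span ℂ s : Set E) :=
    Submodule.dense_iff_topologicalClosure_eq_top.mpr hs
  have hsp : ∀ x ∈ Submodule.span ℂ s, f x = g x := by
    intro x hx
    induction hx using Submodule.span_induction with
    | mem x hx => exact h x hx
    | zero => simp
    | add x y _ _ hx hy => simp [hx, hy]
    | smul c x _ hx => simp [hx]
  ext x
  exact congrFun (Continuous.ext_on hd f.continuous g.continuous hsp) x

/-- A vector orthogonal to a set whose span is dense is zero. -/
private lemma eq_zero_of_inner_dense_span {E : Type*} [NormedAddCommGroup E]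
    [InnerProductSpace ℂ E] [CompleteSpace E]
    {s : Set E} (hs : (Submodule.span ℂ s).topologicalClosure = ⊤)
    {v : E} (h : ∀ x ∈ s, ⟪x, v⟫_ℂ = 0) : v = 0 := by
  have hv : v ∈ (Submodule.span ℂ s)ᗮ := by
    rw [Submodule.mem_orthogonal]
    intro u hu
    induction hu using Submodule.span_induction with
    | mem x hx => exact h x hx
    | zero => simp
    | add x y _ _ hx hy => simp [inner_add_left, hx, hy]
    | smul c x _ hx => simp [inner_smul_left, hx]
  rw [Submodule.topologicalClosure_eq_top_iff] at hs
  simpa [hs] using hv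

theorem bob_joins_alices_GNS_space
    {A : Type*} [NormedRing A] [StarRing A] [CStarRing A] [NormedAlgebra ℂ A]
    [CompleteSpace A] [StarModule ℂ A] [NormedStarGroup A]
    (SA SB : StarSubalgebra ℂ A)
    (hcomm : ∀ a ∈ SA, ∀ b ∈ SB, a * b = b * a)
    (hint : ∀ x, x ∈ SA → x ∈ SB → ∃ c : ℂ, x = c • (1 : A))
    (hgen : (SA ⊔ SB).topologicalClosure = ⊤)
    (ω : A →L[ℂ] ℂ) (hω1 : ω 1 = 1) (hωpos : ∀ a : A, 0 ≤ ω (star a * a))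
    -- GNS representation of ω
    {H : Type*} [NormedAddCommGroup H] [InnerProductSpace ℂ H] [CompleteSpace H]
    (π : A →⋆ₐ[ℂ] (H →L[ℂ] H)) (Ω : H)
    (hΩ : ∀ a : A, ω a = ⟪Ω, π a Ω⟫_ℂ)
    (hcyc : (Submodule.span ℂ (Set.range fun a : A => π a Ω)).topologicalClosure = ⊤)
    -- GNS representation of the marginal ω_A = ω|_{A_A}
    {HA : Type*} [NormedAddCommGroup HA] [InnerProductSpace ℂ HA] [CompleteSpace HA]
    (πA : SA →⋆ₐ[ℂ] (HA →L[ℂ] HA)) (ΩA : HA)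
    (hΩA : ∀ a : SA, ω (a : A) = ⟪ΩA, πA a ΩA⟫_ℂ)
    (hcycA : (Submodule.span ℂ (Set.range fun a : SA => πA a ΩA)).topologicalClosure = ⊤)
    -- the isometry induced by the inclusion A_A ↪ A
    (V : HA →L[ℂ] H) (hViso : ∀ ξ : HA, ‖V ξ‖ = ‖ξ‖)
    (hV : ∀ a : SA, V (πA a ΩA) = π (a : A) Ω) :
    -- T_B(b) := V* π(b) V has the asserted properties:
    (∀ b ∈ SB, ContinuousLinearMap.adjoint V ∘L (π b ∘L V)
        ∈ Set.centralizer (Set.range ⇑πA)) ∧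
    -- unitality
    ContinuousLinearMap.adjoint V ∘L (π (1 : A) ∘L V) = 1 ∧
    -- complete positivity (on the subalgebra A_B)
    (∀ (n : ℕ) (b : Fin n → A), (∀ i, b i ∈ SB) → ∀ ξ : Fin n → HA,
      0 ≤ ∑ i : Fin n, ∑ j : Fin n,
        ⟪ξ i, (ContinuousLinearMap.adjoint V ∘L (π (star (b i) * b j) ∘L V)) (ξ j)⟫_ℂ) ∧
    -- implements ω(ab)
    (∀ (a : SA), ∀ b ∈ SB,
      ω ((a : A) * b) =
        ⟪ΩA, πA a ((ContinuousLinearMap.adjoint V ∘L (π b ∘L V)) ΩA)⟫_ℂ) ∧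
    -- uniqueness among maps into the commutant implementing ω(ab)
    (∀ T' : A → (HA →L[ℂ] HA),
      (∀ b ∈ SB, T' b ∈ Set.centralizer (Set.range ⇑πA)) →
      (∀ (a : SA), ∀ b ∈ SB, ω ((a : A) * b) = ⟪ΩA, πA a (T' b ΩA)⟫_ℂ) →
      ∀ b ∈ SB, T' b = ContinuousLinearMap.adjoint V ∘L (π b ∘L V)) := by
  -- V preserves inner products
  have hVinner : ∀ ξ η : HA, ⟪V ξ, V η⟫_ℂ = ⟪ξ, η⟫_ℂ := fun ξ η =>
    (LinearIsometry.inner_map_map ⟨(V : HA →ₗ[ℂ] H), hViso⟩ ξ η)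
  -- V* V = 1
  have hVadjV : ∀ ξ : HA, ContinuousLinearMap.adjoint V (V ξ) = ξ := by
    intro ξ
    apply ext_inner_left ℂ
    intro v
    rw [ContinuousLinearMap.adjoint_inner_right, hVinner]
  -- V ΩA = Ω
  have hVΩ : V ΩA = Ω := by
    have := hV 1
    simpa using this
  -- V intertwines πA and π
  have hVπ : ∀ (a : SA) (ξ : HA), V (πA a ξ) = π (a : A) (V ξ) := by
    intro a
    have : V ∘L πA a = π (a : A) ∘L V := by
      apply clm_ext_of_dense_span hcycA
      rintro x ⟨a', rfl⟩
      simp only [ContinuousLinearMap.comp_apply]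
      rw [hV a', ← ContinuousLinearMap.mul_apply, ← map_mul, hV (a * a'),
        ← ContinuousLinearMap.mul_apply, ← map_mul]
      norm_cast
    intro ξ
    exact DFunLike.congr_fun this ξ
  -- the adjoint intertwining relation
  have hπV : ∀ (a : SA) (η : H), πA a (ContinuousLinearMap.adjoint V η)
      = ContinuousLinearMap.adjoint V (π (a : A) η) := by
    intro a η
    apply ext_inner_left ℂ
    intro v
    rw [ContinuousLinearMap.adjoint_inner_right]
    have h1 : πA a = ContinuousLinearMap.adjoint (πA (star a)) := by
      rw [← ContinuousLinearMap.star_eq_adjoint, ← map_star, star_star]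
    have h2 : π ((star a : SA) : A) = ContinuousLinearMap.adjoint (π (a : A)) := by
      rw [← ContinuousLinearMap.star_eq_adjoint, ← map_star]
      norm_cast
    rw [h1, ContinuousLinearMap.adjoint_inner_right, ContinuousLinearMap.adjoint_inner_right,
      hVπ (star a) v, h2, ContinuousLinearMap.adjoint_inner_left]
  -- membership in the commutant
  have hcen : ∀ b ∈ SB, ContinuousLinearMap.adjoint V ∘L (π b ∘L V)
      ∈ Set.centralizer (Set.range ⇑πA) := by
    intro b hb
    rw [Set.mem_centralizer_iff]
    rintro _ ⟨a, rfl⟩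
    ext ξ
    simp only [ContinuousLinearMap.mul_apply, ContinuousLinearMap.comp_apply]
    rw [hπV a, ← ContinuousLinearMap.mul_apply, ← map_mul, hcomm (a : A) a.2 b hb,
      map_mul, ContinuousLinearMap.mul_apply, hVπ a ξ]
  refine ⟨hcen, ?_, ?_, ?_, ?_⟩
  · -- unitality
    ext ξ
    simp [hVadjV]
  · -- complete positivity
    intro n b hb ξ
    have key : ∀ i j : Fin n,
        ⟪ξ i, (ContinuousLinearMap.adjoint V ∘L (π (star (b i) * b j) ∘L V)) (ξ j)⟫_ℂ
          = ⟪π (b i) (V (ξ i)), π (b j) (V (ξ j))⟫_ℂ := by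
      intro i j
      simp only [ContinuousLinearMap.comp_apply]
      rw [ContinuousLinearMap.adjoint_inner_right, map_mul, ContinuousLinearMap.mul_apply,
        map_star, ContinuousLinearMap.star_eq_adjoint, ContinuousLinearMap.adjoint_inner_right]
    simp only [key]
    have : ∑ i : Fin n, ∑ j : Fin n, ⟪π (b i) (V (ξ i)), π (b j) (V (ξ j))⟫_ℂ
        = ⟪∑ i : Fin n, π (b i) (V (ξ i)), ∑ j : Fin n, π (b j) (V (ξ j))⟫_ℂ := by
      rw [sum_inner]
      exact Finset.sum_congr rfl fun i _ => by rw [inner_sum]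
    rw [this, inner_self_eq_norm_sq_to_K]
    positivity
  · -- implements ω(ab)
    intro a b hb
    simp only [ContinuousLinearMap.comp_apply]
    rw [hVΩ, hπV a, ContinuousLinearMap.adjoint_inner_right, hVΩ,
      ← ContinuousLinearMap.mul_apply, ← map_mul, ← hΩ]
  · -- uniqueness
    intro T' hT'cen hT'ω b hb
    set Tb := ContinuousLinearMap.adjoint V ∘L (π b ∘L V) with hTb
    have hΩeq : ∀ a : SA, ⟪ΩA, πA a ((T' b - Tb) ΩA)⟫_ℂ = 0 := by
      intro a
      have h1 := hT'ω a b hb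
      have h2 : ω ((a : A) * b) = ⟪ΩA, πA a (Tb ΩA)⟫_ℂ := by
        simp only [hTb, ContinuousLinearMap.comp_apply]
        rw [hVΩ, hπV a, ContinuousLinearMap.adjoint_inner_right, hVΩ,
          ← ContinuousLinearMap.mul_apply, ← map_mul, ← hΩ]
      simp only [ContinuousLinearMap.sub_apply, map_sub, inner_sub_right]
      rw [← h1, ← h2, sub_self]
    have hDcomm : ∀ (a : SA) (ξ : HA), (T' b - Tb) (πA a ξ) = πA a ((T' b - Tb) ξ) := by
      intro a ξ
      have h1 : πA a * T' b = T' b * πA a :=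
        Set.mem_centralizer_iff.mp (hT'cen b hb) (πA a) ⟨a, rfl⟩
      have h2 : πA a * Tb = Tb * πA a :=
        Set.mem_centralizer_iff.mp (hcen b hb) (πA a) ⟨a, rfl⟩
      have e1 := DFunLike.congr_fun h1 ξ
      have e2 := DFunLike.congr_fun h2 ξ
      simp only [ContinuousLinearMap.mul_apply] at e1 e2
      simp only [ContinuousLinearMap.sub_apply, map_sub, ← e1, ← e2]
    -- matrix elements vanish
    have hmat : ∀ a a' : SA, ⟪πA a ΩA, (T' b - Tb) (πA a' ΩA)⟫_ℂ = 0 := by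
      intro a a'
      have h1 : πA a = ContinuousLinearMap.adjoint (πA (star a)) := by
        rw [← ContinuousLinearMap.star_eq_adjoint, ← map_star, star_star]
      rw [hDcomm a', h1, ContinuousLinearMap.adjoint_inner_left,
        ← ContinuousLinearMap.mul_apply, ← map_mul]
      exact hΩeq (star a * a')
    have hvanish : ∀ a' : SA, (T' b - Tb) (πA a' ΩA) = 0 := by
      intro a'
      apply eq_zero_of_inner_dense_span hcycA
      rintro _ ⟨a, rfl⟩
      exact hmat a a'
    have : T' b - Tb = 0 := by
      apply clm_ext_of_dense_span hcycA
      rintro _ ⟨a', rfl⟩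
      simp [hvanish a']
    rw [← sub_eq_zero]
    exact this
end

section
/- Let ω be a pure state on the bipartite algebra M_n(ℂ) ⊗ A_B (A_B an arbitrary unital C*-algebra), let ρ be the density matrix with ω(a ⊗ 1) = tr(ρ a), let k = rank(ρ), and let Ψ ∈ ℂⁿ ⊗ ℂᵏ be the canonical purification of ρ. Then there is a unique unital completely positive map T_B : A_B → M_k(ℂ) such that ω(a ⊗ b) = ⟨Ψ, (a ⊗ T_B(b)) Ψ⟩ for all a ∈ M_n(ℂ) and b ∈ A_B. -/
/- STATEMENT 14: For a pure state ω on the bipartite algebra M_n(ℂ) ⊗ A_B = M_n(A_B), with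
reduced density matrix ρ of rank k and canonical purification Ψ ∈ ℂⁿ ⊗ ℂᵏ, there is a
unique unital completely positive map T_B : A_B → M_k(ℂ) with
ω(a ⊗ b) = ⟨Ψ, (a ⊗ T_B(b)) Ψ⟩ for all a ∈ M_n(ℂ), b ∈ A_B. -/

open scoped ComplexOrder InnerProductSpace

namespace St14
open Matrix
set_option linter.unusedSectionVars false
local notation "cj" => starRingEnd ℂ

variable {B : Type*} [NormedRing B] [StarRing B] [NormedAlgebra ℂ B] [StarModule ℂ B]

/-- the rank-one matrix `|u⟩⟨w| ⊗ b` over `B` -/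
noncomputable def Mlin (n : ℕ) (u w : Fin n → ℂ) : B →ₗ[ℂ] Matrix (Fin n) (Fin n) B where
  toFun b := Matrix.of fun x y => (u x * cj (w y)) • b
  map_add' b b' := by ext x y; simp [smul_add]
  map_smul' c b := by ext x y; simp [Matrix.smul_apply, smul_comm c]

lemma Mlin_apply (n : ℕ) (u w : Fin n → ℂ) (b : B) (x y : Fin n) :
    Mlin n u w b x y = (u x * cj (w y)) • b := rfl

lemma Mlin_star (n : ℕ) (u w : Fin n → ℂ) (b : B) :
    star (Mlin n u w b) = Mlin n w u (star b) := by
  ext x y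
  simp [Mlin_apply, Matrix.star_apply, star_smul, mul_comm]

lemma Mlin_mul (n : ℕ) (u w u' w' : Fin n → ℂ) (b b' : B) :
    (Mlin n u w b) * (Mlin n u' w' b') =
      (∑ l : Fin n, cj (w l) * u' l) • Mlin n u w' (b * b') := by
  ext x y
  simp only [Matrix.mul_apply, Mlin_apply, Matrix.smul_apply, smul_mul_smul_comm,
    smul_smul]
  rw [Finset.sum_mul, Finset.sum_smul]
  exact Finset.sum_congr rfl fun l _ => by congr 1; ring

/-- scalar embedding of complex matrices -/
noncomputable def emb (n : ℕ) (a : Matrix (Fin n) (Fin n) ℂ) : Matrix (Fin n) (Fin n) B :=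
  a.map fun c : ℂ => c • (1 : B)

lemma emb_apply (n : ℕ) (a : Matrix (Fin n) (Fin n) ℂ) (x y : Fin n) :
    (emb n a : Matrix (Fin n) (Fin n) B) x y = a x y • 1 := rfl

lemma emb_one (n : ℕ) : (emb n 1 : Matrix (Fin n) (Fin n) B) = 1 :=
  Matrix.map_one _ (zero_smul ℂ 1) (one_smul ℂ 1)

lemma emb_mul (n : ℕ) (a a' : Matrix (Fin n) (Fin n) ℂ) :
    (emb n (a * a') : Matrix (Fin n) (Fin n) B) = emb n a * emb n a' := by
  ext x y
  simp only [emb_apply, Matrix.mul_apply, smul_mul_smul_comm, mul_one, Finset.sum_smul]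

lemma map_smul_eq_emb_mul (n : ℕ) (a : Matrix (Fin n) (Fin n) ℂ) (b : B) :
    (a.map fun c : ℂ => c • b) = emb n a * (b • 1) := by
  ext x y
  simp only [Matrix.map_apply, Matrix.mul_apply, emb_apply, Matrix.smul_apply,
    Matrix.one_apply]
  rw [Finset.sum_eq_single y]
  · simp [smul_smul]
  · intro l _ hl; simp [hl, smul_ite]
  · simp

lemma scalar_zero {s c : ℂ} (hc : 0 ≤ c)
    (h : ∀ t : ℝ, 0 ≤ (t : ℂ) * s + (t : ℂ) ^ 2 * c) : s = 0 := by
  obtain ⟨hcre, hcim⟩ := Complex.le_def.mp hc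
  have hcre' : 0 ≤ c.re := by simpa using hcre
  have hcim' : c.im = 0 := by simpa using hcim.symm
  have him : s.im = 0 := by
    have h1 := (Complex.le_def.mp (h 1)).2
    have h2 := (Complex.le_def.mp (h (-1))).2
    simp [Complex.add_im, Complex.mul_im, hcim'] at h1 h2
    linarith
  have key : ∀ t : ℝ, 0 ≤ t * s.re + t ^ 2 * c.re := by
    intro t
    have := (Complex.le_def.mp (h t)).1
    simpa [Complex.add_re, Complex.mul_re, him, hcim', pow_two] using this
  have hre : s.re = 0 := by
    have hpos : (0:ℝ) < c.re + 1 := by linarith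
    obtain ⟨t, ht⟩ : ∃ t : ℝ, t * (c.re + 1) = -s.re :=
      ⟨-s.re / (c.re + 1), div_mul_cancel₀ _ (ne_of_gt hpos)⟩
    have h1 := key t
    have hts : t * s.re = -(t ^ 2 * (c.re + 1)) := by linear_combination t * ht
    have ht2 : t ^ 2 ≤ 0 := by nlinarith [hts]
    have ht0 : t = 0 := by nlinarith [sq_nonneg t]
    rw [ht0, zero_mul] at ht
    linarith
  exact Complex.ext hre him

lemma cs_zero {A : Type*} [NonUnitalRing A] [StarRing A] [Module ℂ A]
    [StarModule ℂ A] [IsScalarTower ℂ A A] [SMulCommClass ℂ A A]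
    (ω : A →ₗ[ℂ] ℂ) (hpos : ∀ x, 0 ≤ ω (star x * x))
    {x : A} (hx : ω (star x * x) = 0) (z : A) :
    ω (star x * z) = 0 ∧ ω (star z * x) = 0 := by
  have expand : ∀ (c : ℂ), ω (star (x + c • z) * (x + c • z)) =
      (starRingEnd ℂ) c * ω (star z * x) + c * ω (star x * z)
        + ((starRingEnd ℂ) c * c) * ω (star z * z) := by
    intro c
    rw [star_add, star_smul, add_mul, mul_add, mul_add, smul_mul_assoc, smul_mul_assoc,
      mul_smul_comm, mul_smul_comm]
    simp only [_root_.map_add, _root_.map_smul, hx, starRingEnd_apply, smul_eq_mul, smul_smul]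
    ring
  have key1 : ∀ t : ℝ, 0 ≤ (t:ℂ) * (ω (star z * x) + ω (star x * z))
      + (t:ℂ)^2 * ω (star z * z) := by
    intro t
    have h := hpos (x + (t:ℂ) • z)
    rw [expand] at h
    refine h.trans_eq ?_
    simp only [Complex.conj_ofReal]
    ring
  have key2 : ∀ t : ℝ, 0 ≤ (t:ℂ) * (Complex.I * (ω (star x * z) - ω (star z * x)))
      + (t:ℂ)^2 * ω (star z * z) := by
    intro t
    have h := hpos (x + ((t:ℂ) * Complex.I) • z)
    rw [expand] at h
    refine h.trans_eq ?_
    simp only [_root_.map_mul, Complex.conj_ofReal, Complex.conj_I]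
    linear_combination (-(t:ℂ)^2 * ω (star z * z)) * Complex.I_sq
  have h1 := scalar_zero (hpos z) key1
  have h2 := scalar_zero (hpos z) key2
  have h2' : ω (star x * z) - ω (star z * x) = 0 :=
    (mul_eq_zero.mp h2).resolve_left Complex.I_ne_zero
  exact ⟨by linear_combination (h1 + h2') / 2, by linear_combination (h1 - h2') / 2⟩

/-- rank-one complex matrix -/
def Cmat (n : ℕ) (u w : Fin n → ℂ) : Matrix (Fin n) (Fin n) ℂ :=
  Matrix.of fun x y => u x * cj (w y)

lemma Mlin_one_eq_emb (n : ℕ) (u w : Fin n → ℂ) :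
    (Mlin n u w (1 : B)) = emb n (Cmat n u w) := rfl

lemma emb_smul (n : ℕ) (c : ℂ) (a : Matrix (Fin n) (Fin n) ℂ) :
    (emb n (c • a) : Matrix (Fin n) (Fin n) B) = c • emb n a := by
  ext x y
  simp [emb, Matrix.smul_apply, smul_smul]

lemma Mlin_mul_scalar (n : ℕ) (u w : Fin n → ℂ) (b : B) :
    Mlin n u w (1 : B) * (b • 1) = Mlin n u w b := by
  ext x y
  simp only [Matrix.mul_apply, Mlin_apply, Matrix.smul_apply, Matrix.one_apply]
  rw [Finset.sum_eq_single y]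
  · simp [smul_smul, smul_comm, mul_smul_one]
  · intro l _ hl; simp [hl, smul_ite]
  · simp

lemma scalar_mul_Mlin (n : ℕ) (u w : Fin n → ℂ) (b : B) :
    (b • 1 : Matrix (Fin n) (Fin n) B) * Mlin n u w (1 : B) = Mlin n u w b := by
  ext x y
  simp only [Matrix.mul_apply, Mlin_apply, Matrix.smul_apply, Matrix.one_apply]
  rw [Finset.sum_eq_single x]
  · simp [smul_smul, smul_comm, mul_smul_one]
  · intro l _ hl; simp [Ne.symm hl, smul_ite]
  · simp

lemma Cmat_mul_Cmat (n : ℕ) (u u' w' w : Fin n → ℂ) (a : Matrix (Fin n) (Fin n) ℂ) :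
    Cmat n u u' * a * Cmat n w' w =
      (∑ x, ∑ y, cj (u' x) * a x y * w' y) • Cmat n u w := by
  ext x y
  simp only [Matrix.mul_apply, Cmat, Matrix.of_apply, Matrix.smul_apply, smul_eq_mul,
    Finset.sum_mul, Finset.mul_sum]
  rw [Finset.sum_comm]
  exact Finset.sum_congr rfl fun l _ => Finset.sum_congr rfl fun m _ => by ring

lemma sum_comm3 {α β γ M : Type*} [Fintype α] [Fintype β] [Fintype γ] [AddCommMonoid M]
    (f : α → β → γ → M) :
    ∑ x : α, ∑ y : β, ∑ s : γ, f x y s = ∑ s : γ, ∑ x : α, ∑ y : β, f x y s := by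
  rw [show (∑ x : α, ∑ y : β, ∑ s : γ, f x y s) = ∑ x : α, ∑ s : γ, ∑ y : β, f x y s from
    Finset.sum_congr rfl fun x _ => Finset.sum_comm]
  exact Finset.sum_comm

end St14

theorem one_side_finite_dimensional_normal_form
    {B : Type*} [NormedRing B] [StarRing B] [CStarRing B] [NormedAlgebra ℂ B]
    [CompleteSpace B] [StarModule ℂ B] [NormedStarGroup B]
    (n : ℕ) (hn : 0 < n)
    -- a state ω on the bipartite algebra M_n(B) ≅ M_n(ℂ) ⊗ B
    (ω : Matrix (Fin n) (Fin n) B →ₗ[ℂ] ℂ)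
    (hω1 : ω 1 = 1)
    (hωpos : ∀ x : Matrix (Fin n) (Fin n) B, 0 ≤ ω (star x * x))
    -- ω is pure: every dominated positive functional is a multiple of ω
    (hωpure : ∀ ν : Matrix (Fin n) (Fin n) B →ₗ[ℂ] ℂ,
      (∀ x, 0 ≤ ν (star x * x)) → (∀ x, 0 ≤ ω (star x * x) - ν (star x * x)) →
      ∃ s : ℝ, 0 ≤ s ∧ s ≤ 1 ∧ ∀ x, ν x = (s : ℂ) * ω x)
    -- ρ is the reduced density matrix: ω(a ⊗ 1) = tr(ρ a)
    (ρ : Matrix (Fin n) (Fin n) ℂ)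
    (hρ : ∀ a : Matrix (Fin n) (Fin n) ℂ,
      ω (a.map fun c : ℂ => c • (1 : B)) = (ρ * a).trace)
    -- k = rank ρ, with spectral decomposition ρ = Σ p_i |Φ_i⟩⟨Φ_i|, p_i > 0
    (k : ℕ) (hk : ρ.rank = k)
    (p : Fin k → ℝ) (hp : ∀ i, 0 < p i)
    (Φ : Fin k → EuclideanSpace ℂ (Fin n)) (hΦ : Orthonormal ℂ Φ)
    (hspec : ρ = ∑ i, (p i : ℂ) •
      Matrix.vecMulVec (WithLp.equiv 2 (Fin n → ℂ) (Φ i))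
        (star (WithLp.equiv 2 (Fin n → ℂ) (Φ i))))
    -- Ψ = Σ_i √p_i Φ_i ⊗ |i⟩ is the canonical purification of ρ
    (Ψ : EuclideanSpace ℂ (Fin n × Fin k))
    (hΨ : Ψ = (WithLp.equiv 2 (Fin n × Fin k → ℂ)).symm
      fun q => (Real.sqrt (p q.2) : ℂ) * WithLp.equiv 2 (Fin n → ℂ) (Φ q.2) q.1) :
    -- there is a unique unital completely positive T_B : B → M_k(ℂ) with
    -- ω(a ⊗ b) = ⟨Ψ, (a ⊗ T_B(b)) Ψ⟩
    ∃! TB : B →ₗ[ℂ] Matrix (Fin k) (Fin k) ℂ,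
      TB 1 = 1 ∧
      (∀ (m : ℕ) (b : Fin m → B) (ξ : Fin m → EuclideanSpace ℂ (Fin k)),
        0 ≤ ∑ i : Fin m, ∑ j : Fin m,
          ⟪ξ i, Matrix.toEuclideanLin (TB (star (b i) * b j)) (ξ j)⟫_ℂ) ∧
      ∀ (a : Matrix (Fin n) (Fin n) ℂ) (b : B),
        ω (a.map fun c : ℂ => c • b)
          = ⟪Ψ, Matrix.toEuclideanLin (Matrix.kroneckerMap (· * ·) a (TB b)) Ψ⟫_ℂ := by
  classical
  set Φ' : Fin k → Fin n → ℂ := fun i => WithLp.equiv 2 (Fin n → ℂ) (Φ i) with hΦ'def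
  set sq : Fin k → ℂ := fun i => ((Real.sqrt (p i) : ℝ) : ℂ) with hsqdef
  have honΦ : ∀ i j, (∑ x, (starRingEnd ℂ) (Φ' i x) * Φ' j x) = if i = j then 1 else 0 := by
    intro i j
    have h := orthonormal_iff_ite.mp hΦ i j
    rw [PiLp.inner_apply] at h
    simpa [RCLike.inner_apply, hΦ'def, mul_comm] using h
  have hsq_conj : ∀ i, (starRingEnd ℂ) (sq i) = sq i := fun i => Complex.conj_ofReal _
  have hsq_sq : ∀ i, sq i * sq i = (p i : ℂ) := by
    intro i
    rw [hsqdef]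
    rw [← Complex.ofReal_mul, Real.mul_self_sqrt (hp i).le]
  have hsq_ne : ∀ i, sq i ≠ 0 := by
    intro i
    simp only [hsqdef]
    exact Complex.ofReal_ne_zero.mpr (ne_of_gt (Real.sqrt_pos.mpr (hp i)))
  have hρ_apply : ∀ x v, ρ x v = ∑ l, (p l : ℂ) * (Φ' l x * (starRingEnd ℂ) (Φ' l v)) := by
    intro x v
    rw [hspec, Matrix.sum_apply]
    refine Finset.sum_congr rfl fun l _ => ?_
    simp only [Matrix.smul_apply, Matrix.vecMulVec_apply, Pi.star_apply, smul_eq_mul,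
      starRingEnd_apply]
    rfl
  have heig : ∀ i x, (∑ v, ρ x v * Φ' i v) = (p i : ℂ) * Φ' i x := by
    intro i x
    calc (∑ v, ρ x v * Φ' i v)
        = ∑ l, (p l : ℂ) * Φ' l x * (∑ v, (starRingEnd ℂ) (Φ' l v) * Φ' i v) := by
          simp only [hρ_apply, Finset.sum_mul]
          rw [Finset.sum_comm]
          exact Finset.sum_congr rfl fun l _ => by
            rw [Finset.mul_sum]
            exact Finset.sum_congr rfl fun v _ => by ring
      _ = (p i : ℂ) * Φ' i x := by
          simp only [honΦ, mul_ite, mul_one, mul_zero]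
          simp [Finset.sum_ite_eq']
  have homega1 : ∀ i j,
      ω (St14.Mlin n (Φ' i) (Φ' j) (1 : B)) = if i = j then (p i : ℂ) else 0 := by
    intro i j
    have h0 : ω (St14.Mlin n (Φ' i) (Φ' j) (1 : B))
        = (ρ * St14.Cmat n (Φ' i) (Φ' j)).trace := hρ _
    rw [h0, Matrix.trace]
    calc ∑ x, (ρ * St14.Cmat n (Φ' i) (Φ' j)).diag x
        = ∑ x, (starRingEnd ℂ) (Φ' j x) * ((p i : ℂ) * Φ' i x) := by
          refine Finset.sum_congr rfl fun x _ => ?_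
          rw [Matrix.diag_apply, Matrix.mul_apply, ← heig i x, Finset.mul_sum]
          exact Finset.sum_congr rfl fun v _ => by
            simp only [St14.Cmat, Matrix.of_apply]; ring
      _ = (p i : ℂ) * (∑ x, (starRingEnd ℂ) (Φ' j x) * Φ' i x) := by
          rw [Finset.mul_sum]
          exact Finset.sum_congr rfl fun x _ => by ring
      _ = if i = j then (p i : ℂ) else 0 := by
          rw [honΦ]
          by_cases h : i = j <;> simp [h, eq_comm]
  have hsum_p : (∑ i, (p i : ℂ)) = 1 := by
    have h1 : ω (St14.emb n (1 : Matrix (Fin n) (Fin n) ℂ)) = (ρ * 1).trace := hρ 1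
    rw [St14.emb_one, hω1, mul_one, Matrix.trace] at h1
    have h2 : ∑ x, ρ.diag x = ∑ l, (p l : ℂ) := by
      simp only [Matrix.diag_apply, hρ_apply]
      rw [Finset.sum_comm]
      refine Finset.sum_congr rfl fun l _ => ?_
      calc (∑ x, (p l : ℂ) * (Φ' l x * (starRingEnd ℂ) (Φ' l x)))
          = (p l : ℂ) * (∑ x, (starRingEnd ℂ) (Φ' l x) * Φ' l x) := by
            rw [Finset.mul_sum]
            exact Finset.sum_congr rfl fun x _ => by ring
        _ = (p l : ℂ) := by rw [honΦ]; simp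
    rw [h2] at h1
    exact h1.symm
  have hk0 : 0 < k := by
    rcases Nat.eq_zero_or_pos k with h | h
    · exfalso; subst h; simpa using hsum_p
    · exact h
  have key3 : ∀ (a : Matrix (Fin n) (Fin n) ℂ) (b : B),
      ω (a.map fun c : ℂ => c • b)
        = ∑ r, ∑ s, (∑ x, ∑ y, (starRingEnd ℂ) (Φ' r x) * a x y * Φ' s y)
            * ω (St14.Mlin n (Φ' r) (Φ' s) b) := by
    intro a b
    set c : Matrix (Fin n) (Fin n) B := b • 1 with hc
    set eP : Matrix (Fin n) (Fin n) B := ∑ i, St14.Mlin n (Φ' i) (Φ' i) (1:B) with hePdef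
    set x0 : Matrix (Fin n) (Fin n) B := 1 - eP with hx0def
    have hx0star : star x0 = x0 := by
      rw [hx0def, star_sub, star_one, hePdef, star_sum]
      simp only [St14.Mlin_star, star_one]
    have heP2 : eP * eP = eP := by
      rw [hePdef, Finset.sum_mul_sum]
      calc ∑ i, ∑ j, St14.Mlin n (Φ' i) (Φ' i) (1:B) * St14.Mlin n (Φ' j) (Φ' j) (1:B)
          = ∑ i, ∑ j, if i = j then St14.Mlin n (Φ' i) (Φ' j) (1:B) else 0 := by
            refine Finset.sum_congr rfl fun i _ => Finset.sum_congr rfl fun j _ => ?_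
            rw [St14.Mlin_mul, honΦ, mul_one]
            by_cases h : i = j <;> simp [h]
        _ = ∑ i, St14.Mlin n (Φ' i) (Φ' i) (1:B) := by
            refine Finset.sum_congr rfl fun i _ => ?_
            rw [Finset.sum_ite_eq]
            simp
    have hx0sq : x0 * x0 = x0 := by
      have expand : x0 * x0 = 1 - eP - eP + eP * eP := by rw [hx0def]; noncomm_ring
      rw [expand, heP2, hx0def]
      abel
    have hωx0 : ω (star x0 * x0) = 0 := by
      rw [hx0star, hx0sq, hx0def, map_sub, hω1, hePdef, map_sum]
      have : ∑ i, ω (St14.Mlin n (Φ' i) (Φ' i) (1:B)) = ∑ i, (p i : ℂ) := by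
        refine Finset.sum_congr rfl fun i _ => ?_
        rw [homega1]; simp
      rw [this, hsum_p, sub_self]
    have hz1 : ∀ z, ω (x0 * z) = 0 := by
      intro z
      have h := (St14.cs_zero ω hωpos hωx0 z).1
      rwa [hx0star] at h
    have hz2 : ∀ z, ω (z * x0) = 0 := by
      intro z
      have h := (St14.cs_zero ω hωpos hωx0 (star z)).2
      rwa [star_star] at h
    have hcommx0 : x0 * c = c * x0 := by
      rw [hx0def, hc, sub_mul, mul_sub, one_mul, mul_one, hePdef, Finset.sum_mul,
        Finset.mul_sum]
      simp only [St14.Mlin_mul_scalar, St14.scalar_mul_Mlin]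
    have hsplit : St14.emb n a * c
        = eP * St14.emb n a * eP * c + x0 * (St14.emb n a * c)
          + eP * St14.emb n a * (x0 * c) := by
      rw [hx0def]; noncomm_ring
    have hePaeP : eP * St14.emb n a * eP
        = ∑ r, ∑ s, (∑ x, ∑ y, (starRingEnd ℂ) (Φ' r x) * a x y * Φ' s y)
            • St14.Mlin n (Φ' r) (Φ' s) (1:B) := by
      rw [hePdef, Finset.sum_mul, Finset.sum_mul]
      refine Finset.sum_congr rfl fun r _ => ?_
      rw [Finset.mul_sum]
      refine Finset.sum_congr rfl fun s _ => ?_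
      rw [St14.Mlin_one_eq_emb, St14.Mlin_one_eq_emb, ← St14.emb_mul, ← St14.emb_mul,
        St14.Cmat_mul_Cmat, St14.emb_smul, ← St14.Mlin_one_eq_emb]
    have hstart : ω (a.map fun c' : ℂ => c' • b) = ω (St14.emb n a * c) := by
      rw [hc, ← St14.map_smul_eq_emb_mul]
    rw [hstart, hsplit, map_add, map_add, hz1 (St14.emb n a * c)]
    have hlast : eP * St14.emb n a * (x0 * c) = (eP * St14.emb n a * c) * x0 := by
      rw [hcommx0]; noncomm_ring
    rw [hlast, hz2 (eP * St14.emb n a * c), add_zero, add_zero]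
    rw [show eP * St14.emb n a * eP * c
        = (eP * St14.emb n a * eP) * c from by noncomm_ring, hePaeP, Finset.sum_mul]
    simp only [Finset.sum_mul, smul_mul_assoc, hc, St14.Mlin_mul_scalar, map_sum, map_smul,
      smul_eq_mul]
  have hΨ_apply : ∀ q : Fin n × Fin k, Ψ q = sq q.2 * Φ' q.2 q.1 := by
    intro q
    rw [hΨ]
    simp [WithLp.equiv_symm_apply, PiLp.toLp_apply, hΦ'def, hsqdef]
  have hinner : ∀ (a : Matrix (Fin n) (Fin n) ℂ) (T : Matrix (Fin k) (Fin k) ℂ),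
      ⟪Ψ, Matrix.toEuclideanLin (Matrix.kroneckerMap (· * ·) a T) Ψ⟫_ℂ
        = ∑ r, ∑ s, (sq r * sq s * T r s)
            * (∑ x, ∑ y, (starRingEnd ℂ) (Φ' r x) * a x y * Φ' s y) := by
    intro a T
    rw [Matrix.toEuclideanLin_apply, PiLp.inner_apply]
    calc ∑ q : Fin n × Fin k, ⟪Ψ q, ((WithLp.equiv 2 (Fin n × Fin k → ℂ)).symm
            ((Matrix.kroneckerMap (· * ·) a T).mulVec
              ((WithLp.equiv 2 (Fin n × Fin k → ℂ)) Ψ))) q⟫_ℂ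
        = ∑ x, ∑ r, ∑ y, ∑ s, (sq r * (starRingEnd ℂ) (Φ' r x))
            * ((a x y * T r s) * (sq s * Φ' s y)) := by
          rw [Fintype.sum_prod_type]
          refine Finset.sum_congr rfl fun x _ => Finset.sum_congr rfl fun r _ => ?_
          simp only [RCLike.inner_apply', WithLp.equiv_symm_apply, PiLp.toLp_apply,
            WithLp.equiv_apply, Matrix.mulVec, dotProduct,
            Fintype.sum_prod_type, Matrix.kroneckerMap_apply, hΨ_apply, map_mul,
            hsq_conj, Finset.mul_sum]
      _ = ∑ r, ∑ s, ∑ x, ∑ y, (sq r * (starRingEnd ℂ) (Φ' r x))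
            * ((a x y * T r s) * (sq s * Φ' s y)) := by
          rw [Finset.sum_comm]
          exact Finset.sum_congr rfl fun r _ => St14.sum_comm3 _
      _ = ∑ r, ∑ s, (sq r * sq s * T r s)
            * (∑ x, ∑ y, (starRingEnd ℂ) (Φ' r x) * a x y * Φ' s y) := by
          refine Finset.sum_congr rfl fun r _ => Finset.sum_congr rfl fun s _ => ?_
          rw [Finset.mul_sum]
          refine Finset.sum_congr rfl fun x _ => ?_
          rw [Finset.mul_sum]
          exact Finset.sum_congr rfl fun y _ => by ring
  let TB : B →ₗ[ℂ] Matrix (Fin k) (Fin k) ℂ :=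
    { toFun := fun b => Matrix.of fun i j =>
        (sq i)⁻¹ * (sq j)⁻¹ * ω (St14.Mlin n (Φ' i) (Φ' j) b)
      map_add' := by
        intro b b'; ext i j
        simp only [Matrix.of_apply, map_add, Matrix.add_apply]; ring
      map_smul' := by
        intro c b; ext i j
        simp only [Matrix.of_apply, map_smul, Matrix.smul_apply, smul_eq_mul,
          RingHom.id_apply]; ring }
  have hTB_apply : ∀ (b : B) (i j : Fin k),
      TB b i j = (sq i)⁻¹ * (sq j)⁻¹ * ω (St14.Mlin n (Φ' i) (Φ' j) b) := fun _ _ _ => rfl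
  have hprop3 : ∀ (a : Matrix (Fin n) (Fin n) ℂ) (b : B),
      ω (a.map fun c : ℂ => c • b)
        = ⟪Ψ, Matrix.toEuclideanLin (Matrix.kroneckerMap (· * ·) a (TB b)) Ψ⟫_ℂ := by
    intro a b
    rw [key3 a b, hinner a (TB b)]
    refine Finset.sum_congr rfl fun r _ => Finset.sum_congr rfl fun s _ => ?_
    rw [hTB_apply]
    have h1 : sq r * sq s * ((sq r)⁻¹ * (sq s)⁻¹ * ω (St14.Mlin n (Φ' r) (Φ' s) b))
        = ω (St14.Mlin n (Φ' r) (Φ' s) b) := by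
      calc sq r * sq s * ((sq r)⁻¹ * (sq s)⁻¹ * ω (St14.Mlin n (Φ' r) (Φ' s) b))
          = (sq r * (sq r)⁻¹) * ((sq s * (sq s)⁻¹) * ω (St14.Mlin n (Φ' r) (Φ' s) b)) := by
            ring
        _ = ω (St14.Mlin n (Φ' r) (Φ' s) b) := by
            rw [mul_inv_cancel₀ (hsq_ne r), mul_inv_cancel₀ (hsq_ne s), one_mul, one_mul]
    rw [h1, mul_comm]
  have collapse : ∀ (i j : Fin k) (T : Matrix (Fin k) (Fin k) ℂ),
      (∑ r, ∑ s, (sq r * sq s * T r s)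
        * ((if r = i then (1:ℂ) else 0) * (if j = s then 1 else 0)))
        = sq i * sq j * T i j := by
    intro i j T
    simp only [mul_ite, mul_one, mul_zero, ite_mul, zero_mul, one_mul]
    rw [Finset.sum_eq_single i]
    · simp [Finset.sum_ite_eq]
    · intro r _ hr; simp [hr]
    · simp
  have hαδ : ∀ (i j r s : Fin k),
      (∑ x, ∑ y, (starRingEnd ℂ) (Φ' r x) * (St14.Cmat n (Φ' i) (Φ' j)) x y * Φ' s y)
        = (if r = i then (1:ℂ) else 0) * (if j = s then 1 else 0) := by
    intro i j r s
    rw [← honΦ r i, ← honΦ j s, Finset.sum_mul_sum]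
    refine Finset.sum_congr rfl fun x _ => Finset.sum_congr rfl fun y _ => ?_
    simp only [St14.Cmat, Matrix.of_apply]
    ring
  refine ⟨TB, ⟨?_, ?_, hprop3⟩, ?_⟩
  · -- unitality
    ext i j
    rw [hTB_apply, homega1]
    by_cases h : i = j
    · subst h
      simp only [if_pos rfl, Matrix.one_apply_eq]
      calc (sq i)⁻¹ * (sq i)⁻¹ * (p i : ℂ)
          = (sq i)⁻¹ * (sq i)⁻¹ * (sq i * sq i) := by rw [hsq_sq i]
        _ = (sq i * (sq i)⁻¹) * (sq i * (sq i)⁻¹) := by ring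
        _ = 1 := by rw [mul_inv_cancel₀ (hsq_ne i), one_mul]
    · simp [h, Matrix.one_apply_ne h]
  · -- complete positivity
    intro m b ξ
    set z0 : Fin k := ⟨0, hk0⟩ with hz0
    set xx : Matrix (Fin n) (Fin n) B := ∑ j : Fin m, ∑ s : Fin k,
      ((sq s)⁻¹ * ξ j s) • St14.Mlin n (Φ' z0) (Φ' s) (b j) with hxxdef
    have hstar : star xx = ∑ i : Fin m, ∑ r : Fin k,
        (starRingEnd ℂ) ((sq r)⁻¹ * ξ i r) • St14.Mlin n (Φ' r) (Φ' z0) (star (b i)) := by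
      rw [hxxdef, star_sum]
      refine Finset.sum_congr rfl fun i _ => ?_
      rw [star_sum]
      refine Finset.sum_congr rfl fun r _ => ?_
      rw [star_smul, St14.Mlin_star]
      rfl
    have hxx : ω (star xx * xx) = ∑ i : Fin m, ∑ r : Fin k, ∑ j : Fin m, ∑ s : Fin k,
        (starRingEnd ℂ) ((sq r)⁻¹ * ξ i r) * ((sq s)⁻¹ * ξ j s)
          * ω (St14.Mlin n (Φ' r) (Φ' s) (star (b i) * b j)) := by
      rw [hstar, hxxdef, Finset.sum_mul]
      rw [map_sum]
      refine Finset.sum_congr rfl fun i _ => ?_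
      rw [Finset.sum_mul, map_sum]
      refine Finset.sum_congr rfl fun r _ => ?_
      rw [Finset.mul_sum, map_sum]
      refine Finset.sum_congr rfl fun j _ => ?_
      rw [Finset.mul_sum, map_sum]
      refine Finset.sum_congr rfl fun s _ => ?_
      rw [smul_mul_smul_comm, St14.Mlin_mul, honΦ]
      simp only [if_pos rfl, if_true, one_mul, one_smul, map_smul, smul_eq_mul]
    have hexp : ∀ i j : Fin m,
        ⟪ξ i, Matrix.toEuclideanLin (TB (star (b i) * b j)) (ξ j)⟫_ℂ
          = ∑ r, ∑ s, (starRingEnd ℂ) ((sq r)⁻¹ * ξ i r) * ((sq s)⁻¹ * ξ j s)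
              * ω (St14.Mlin n (Φ' r) (Φ' s) (star (b i) * b j)) := by
      intro i j
      rw [Matrix.toEuclideanLin_apply, PiLp.inner_apply]
      refine Finset.sum_congr rfl fun r _ => ?_
      simp only [RCLike.inner_apply', WithLp.equiv_symm_apply, PiLp.toLp_apply,
        WithLp.equiv_apply, Matrix.mulVec, dotProduct, hTB_apply, map_mul, map_inv₀, hsq_conj,
        Finset.mul_sum]
      exact Finset.sum_congr rfl fun s _ => by ring
    have hmain : (∑ i : Fin m, ∑ j : Fin m,
        ⟪ξ i, Matrix.toEuclideanLin (TB (star (b i) * b j)) (ξ j)⟫_ℂ)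
          = ω (star xx * xx) := by
      rw [hxx]
      refine Finset.sum_congr rfl fun i _ => ?_
      rw [Finset.sum_comm]
      exact Finset.sum_congr rfl fun j _ => hexp i j
    rw [hmain]
    exact hωpos xx
  · -- uniqueness
    intro TB' h'
    obtain ⟨-, -, h3'⟩ := h'
    apply LinearMap.ext; intro b
    ext i j
    have e1 : ⟪Ψ, Matrix.toEuclideanLin
          (Matrix.kroneckerMap (· * ·) (St14.Cmat n (Φ' i) (Φ' j)) (TB' b)) Ψ⟫_ℂ
        = ⟪Ψ, Matrix.toEuclideanLin
          (Matrix.kroneckerMap (· * ·) (St14.Cmat n (Φ' i) (Φ' j)) (TB b)) Ψ⟫_ℂ :=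
      (h3' (St14.Cmat n (Φ' i) (Φ' j)) b).symm.trans
        (hprop3 (St14.Cmat n (Φ' i) (Φ' j)) b)
    rw [hinner, hinner] at e1
    simp only [hαδ, collapse] at e1
    exact mul_left_cancel₀ (mul_ne_zero (hsq_ne i) (hsq_ne j)) e1
end

section
/- Let ω be a pure state on a bipartite algebra A satisfying Haag duality, i.e. M_A = M_B' where M_j = π_ω(A_j)''. Then the set of functionals a ↦ ω(ab), b ∈ A_B, is weak*-dense in the real-linear span of the order interval [0, ω_A] ⊆ A_A*, where ω_A is the marginal of ω on A_A. -/
/- STATEMENT 16: If a pure state ω on a bipartite algebra satisfies Haag duality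
(M_A = M_B', i.e. (π(A_A))'' = (π(A_B))'), then the functionals a ↦ ω(ab), b ∈ A_B, are
weak*-dense in the real-linear span of the order interval [0, ω_A] of the marginal ω_A. -/

open scoped ComplexOrder InnerProductSpace

set_option maxHeartbeats 1000000

open scoped ComplexOrder InnerProductSpace
open Complex

lemma aux_herm {R : Type*} [Ring R] [StarRing R] [Algebra ℂ R] [StarModule ℂ R]
    (μ : R →ₗ[ℂ] ℂ) (hpos : ∀ a : R, 0 ≤ μ (star a * a)) (a b : R) :
    μ (star b * a) = starRingEnd ℂ (μ (star a * b)) := by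
  have him : ∀ c : R, (μ (star c * c)).im = 0 := fun c =>
    ((Complex.nonneg_iff.mp (hpos c)).2).symm
  set x := μ (star a * b) with hx
  set y := μ (star b * a) with hy
  have e1 : star (a + b) * (a + b)
      = star a * a + (star a * b + (star b * a + star b * b)) := by
    rw [star_add]; noncomm_ring
  have e2 : star (a + Complex.I • b) * (a + Complex.I • b)
      = star a * a + (Complex.I • (star a * b) +
        ((-Complex.I) • (star b * a) + star b * b)) := by
    rw [star_add, star_smul]
    simp only [star_def, Complex.conj_I, mul_add, add_mul, smul_mul_assoc, mul_smul_comm]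
    match_scalars <;> simp [Complex.I_sq]
  have h1 := him (a + b)
  have h2 := him (a + Complex.I • b)
  rw [e1] at h1
  rw [e2] at h2
  simp only [map_add, map_smul, smul_eq_mul, Complex.add_im, Complex.mul_im,
    Complex.I_re, Complex.I_im, Complex.neg_re, Complex.neg_im, him a, him b,
    neg_mul, one_mul, zero_mul] at h1 h2
  apply Complex.ext <;> simp only [Complex.conj_re, Complex.conj_im] <;> linarith

lemma aux_cs {R : Type*} [Ring R] [StarRing R] [Algebra ℂ R] [StarModule ℂ R]
    (μ : R →ₗ[ℂ] ℂ) (hpos : ∀ a : R, 0 ≤ μ (star a * a)) (a b : R) :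
    ‖μ (star a * b)‖ ^ 2 ≤ (μ (star a * a)).re * (μ (star b * b)).re := by
  have hposre : ∀ c : R, 0 ≤ (μ (star c * c)).re := fun c =>
    (Complex.nonneg_iff.mp (hpos c)).1
  set x := μ (star a * b) with hxdef
  by_cases hx : x = 0
  · rw [hx]
    simpa using mul_nonneg (hposre a) (hposre b)
  · set c : ℂ := (starRingEnd ℂ) x / (‖x‖ : ℂ) with hc
    have hxn : (‖x‖ : ℂ) ≠ 0 := by
      simpa using norm_ne_zero_iff.mpr hx
    have hcx : c * x = (‖x‖ : ℂ) := by
      rw [hc, div_mul_eq_mul_div, Complex.conj_mul', sq]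
      field_simp
    have hcc : (starRingEnd ℂ) c * c = 1 := by
      have h1 : (starRingEnd ℂ) c = x / (‖x‖ : ℂ) := by
        rw [hc, map_div₀, Complex.conj_conj, Complex.conj_ofReal]
      rw [h1, hc, div_mul_div_comm, mul_comm x, Complex.conj_mul', sq]
      have h2 : ((‖x‖ : ℝ) : ℂ) ≠ 0 := by
        simpa using hxn
      field_simp
    have hy : μ (star b * a) = (starRingEnd ℂ) x := aux_herm μ hpos a b
    have A1 : μ (star a * (c • b)) = (‖x‖ : ℂ) := by
      rw [mul_smul_comm, map_smul, smul_eq_mul, ← hxdef, hcx]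
    have A2 : μ (((starRingEnd ℂ) c • star b) * a) = (‖x‖ : ℂ) := by
      rw [smul_mul_assoc, map_smul, smul_eq_mul, hy]
      calc (starRingEnd ℂ) c * (starRingEnd ℂ) x = (starRingEnd ℂ) (c * x) := by
            rw [map_mul]
        _ = (‖x‖ : ℂ) := by rw [hcx, Complex.conj_ofReal]
    have A3 : μ (((starRingEnd ℂ) c • star b) * (c • b)) = μ (star b * b) := by
      rw [smul_mul_assoc, mul_smul_comm, smul_smul, map_smul, smul_eq_mul, hcc, one_mul]
    have key : ∀ t : ℝ, 0 ≤ (μ (star b * b)).re * (t * t) + (-(2 * ‖x‖)) * t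
        + (μ (star a * a)).re := by
      intro t
      have hstar : star (a - (t : ℂ) • (c • b))
          = star a - (t : ℂ) • ((starRingEnd ℂ) c • star b) := by
        rw [star_sub, star_smul, star_smul]
        simp [Complex.star_def, Complex.conj_ofReal, smul_smul, mul_comm]
      have hexpand : star (a - (t : ℂ) • (c • b)) * (a - (t : ℂ) • (c • b))
          = star a * a - (t : ℂ) • (star a * (c • b))
            - (t : ℂ) • (((starRingEnd ℂ) c • star b) * a)
            + ((t : ℂ) * (t : ℂ)) • (((starRingEnd ℂ) c • star b) * (c • b)) := by
        rw [hstar]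
        simp only [sub_mul, mul_sub, smul_mul_assoc, mul_smul_comm, smul_smul]
        module
      have hval : μ (star (a - (t : ℂ) • (c • b)) * (a - (t : ℂ) • (c • b)))
          = μ (star a * a) - (t : ℂ) * (‖x‖ : ℂ) - (t : ℂ) * (‖x‖ : ℂ)
            + ((t : ℂ) * (t : ℂ)) * μ (star b * b) := by
        rw [hexpand]
        simp only [map_add, map_sub, map_smul, smul_eq_mul, A1, A2, A3]
      have h0 := hposre (a - (t : ℂ) • (c • b))
      rw [hval] at h0
      simp only [Complex.add_re, Complex.sub_re, Complex.mul_re, Complex.ofReal_re,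
        Complex.ofReal_im, Complex.mul_im, zero_mul, mul_zero, sub_zero, add_zero,
        zero_sub, neg_zero] at h0
      linarith
    have hd := discrim_le_zero key
    rw [discrim] at hd
    have hn : 0 ≤ ‖x‖ := norm_nonneg x
    nlinarith [hd, hn]

lemma aux_rn {A : Type*} [Ring A] [StarRing A] [Algebra ℂ A] [StarModule ℂ A]
    {H : Type*} [NormedAddCommGroup H] [InnerProductSpace ℂ H] [CompleteSpace H]
    (π : A →⋆ₐ[ℂ] (H →L[ℂ] H)) (Ω : H) (SA : StarSubalgebra ℂ A)
    (μ : ↥SA →ₗ[ℂ] ℂ)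
    (hpos : ∀ a : ↥SA, 0 ≤ μ (star a * a))
    (hdom : ∀ a : ↥SA, (μ (star a * a)).re ≤ ‖π ↑a Ω‖ ^ 2) :
    ∃ T : H →L[ℂ] H, (∀ s : ↥SA, π ↑s * T = T * π ↑s) ∧
      ∀ a : ↥SA, μ a = ⟪Ω, T (π ↑a Ω)⟫_ℂ := by
  classical
  set L : ↥SA →ₗ[ℂ] H :=
    { toFun := fun a => π ↑a Ω
      map_add' := fun a b => by
        simp [AddMemClass.coe_add, map_add, ContinuousLinearMap.add_apply]
      map_smul' := fun c a => by
        simp [SetLike.val_smul, map_smul, ContinuousLinearMap.smul_apply] } with hLdef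
  have hL : ∀ a : ↥SA, L a = π ↑a Ω := fun a => rfl
  set K0 : Submodule ℂ H := LinearMap.range L with hK0def
  set K : Submodule ℂ H := K0.topologicalClosure with hKdef
  haveI : CompleteSpace K := K0.isClosed_topologicalClosure.completeSpace_coe
  -- Cauchy-Schwarz bound
  have hposre : ∀ a : ↥SA, 0 ≤ (μ (star a * a)).re := fun a =>
    (Complex.nonneg_iff.mp (hpos a)).1
  have hb : ∀ a b : ↥SA, ‖μ (star a * b)‖ ≤ ‖L a‖ * ‖L b‖ := by
    intro a b
    have h1 := aux_cs μ hpos a b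
    have h2 := hdom a
    have h3 := hdom b
    have h4 := hposre a
    have h5 := hposre b
    have h6 : ‖μ (star a * b)‖ ^ 2 ≤ (‖L a‖ * ‖L b‖) ^ 2 := by
      rw [mul_pow]
      calc ‖μ (star a * b)‖ ^ 2 ≤ (μ (star a * a)).re * (μ (star b * b)).re := h1
        _ ≤ ‖L a‖ ^ 2 * ‖L b‖ ^ 2 := by
            apply mul_le_mul h2 h3 h5 (by positivity)
    nlinarith [norm_nonneg (μ (star a * b)), mul_nonneg (norm_nonneg (L a)) (norm_nonneg (L b))]
  -- uniqueness
  have huniq : ∀ w : H, w ∈ K → (∀ a : ↥SA, ⟪w, L a⟫_ℂ = 0) → w = 0 := by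
    intro w hw h0
    have hcl : IsClosed {z : H | ⟪w, z⟫_ℂ = 0} :=
      isClosed_eq (continuous_const.inner continuous_id) continuous_const
    have hsub : (K0 : Set H) ⊆ {z : H | ⟪w, z⟫_ℂ = 0} := by
      rintro z ⟨a, rfl⟩; exact h0 a
    have : (K : Set H) ⊆ {z : H | ⟪w, z⟫_ℂ = 0} := by
      rw [hKdef, Submodule.topologicalClosure_coe]
      exact closure_minimal hsub hcl
    have hww : ⟪w, w⟫_ℂ = 0 := this hw
    exact inner_self_eq_zero.mp hww
  -- construction of the vectors v b
  have hv : ∀ b : ↥SA, ∃ v : H, v ∈ K ∧ ‖v‖ ≤ ‖L b‖ ∧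
      ∀ a : ↥SA, ⟪v, L a⟫_ℂ = starRingEnd ℂ (μ (star a * b)) := by
    intro b
    set φ : ↥SA →ₗ[ℂ] ℂ :=
      { toFun := fun a => starRingEnd ℂ (μ (star a * b))
        map_add' := fun a a' => by
          show starRingEnd ℂ (μ (star (a + a') * b)) = _
          rw [star_add, add_mul, map_add, map_add]
        map_smul' := fun d a => by
          show starRingEnd ℂ (μ (star (d • a) * b)) = _
          rw [star_smul, smul_mul_assoc, map_smul, smul_eq_mul, map_mul]
          simp [Complex.star_def] } with hφdef
    have hφ : ∀ a : ↥SA, φ a = starRingEnd ℂ (μ (star a * b)) := fun a => rfl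
    have hφb : ∀ a : ↥SA, ‖φ a‖ ≤ ‖L b‖ * ‖L a‖ := by
      intro a
      rw [hφ]
      calc ‖starRingEnd ℂ (μ (star a * b))‖ = ‖μ (star a * b)‖ := by
            simp
        _ ≤ ‖L a‖ * ‖L b‖ := hb a b
        _ = ‖L b‖ * ‖L a‖ := mul_comm _ _
    have hker : LinearMap.ker L ≤ LinearMap.ker φ := by
      intro a ha
      rw [LinearMap.mem_ker] at ha ⊢
      have := hφb a
      rw [ha, norm_zero, mul_zero] at this
      exact norm_le_zero_iff.mp this
    set g0 : ↥K0 →ₗ[ℂ] ℂ :=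
      ((LinearMap.ker L).liftQ φ hker) ∘ₗ
        (LinearMap.quotKerEquivRange L).symm.toLinearMap with hg0def
    have hg0 : ∀ (a : ↥SA) (h : L a ∈ K0), g0 ⟨L a, h⟩ = φ a := by
      intro a h
      have h1 : (LinearMap.quotKerEquivRange L).symm ⟨L a, h⟩
          = Submodule.Quotient.mk a := by
        rw [LinearEquiv.symm_apply_eq]
        exact Subtype.ext (LinearMap.quotKerEquivRange_apply_mk (f := L) a).symm
      rw [hg0def]
      simp only [LinearMap.coe_comp, Function.comp_apply, LinearEquiv.coe_toLinearMap, h1]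
      rw [Submodule.liftQ_apply]
    have hg0b : ∀ z : ↥K0, ‖g0 z‖ ≤ ‖L b‖ * ‖z‖ := by
      rintro ⟨z, hz⟩
      obtain ⟨a, rfl⟩ := hz
      rw [hg0 a ⟨a, rfl⟩]
      exact hφb a
    set g : ↥K0 →L[ℂ] ℂ := g0.mkContinuous ‖L b‖ hg0b with hgdef
    obtain ⟨G, hG1, hG2⟩ := exists_extension_norm_eq K0 g
    set Gr : ↥K →L[ℂ] ℂ := G.comp K.subtypeL with hGrdef
    have hGrb : ‖Gr‖ ≤ ‖L b‖ := by
      apply ContinuousLinearMap.opNorm_le_bound _ (norm_nonneg (L b))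
      intro z
      calc ‖Gr z‖ = ‖G (z : H)‖ := rfl
        _ ≤ ‖G‖ * ‖(z : H)‖ := G.le_opNorm _
        _ = ‖g‖ * ‖z‖ := by rw [hG2]; rfl
        _ ≤ ‖L b‖ * ‖z‖ := by
            have := g0.mkContinuous_norm_le (norm_nonneg (L b)) hg0b
            exact mul_le_mul_of_nonneg_right this (norm_nonneg z)
    set vb : ↥K := (InnerProductSpace.toDual ℂ ↥K).symm Gr with hvbdef
    refine ⟨(vb : H), vb.2, ?_, ?_⟩
    · calc ‖(vb : H)‖ = ‖vb‖ := rfl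
        _ = ‖Gr‖ := by rw [hvbdef]; exact LinearIsometryEquiv.norm_map _ _
        _ ≤ ‖L b‖ := hGrb
    · intro a
      have hmem : L a ∈ K := K0.le_topologicalClosure (LinearMap.mem_range_self L a)
      have h1 : ⟪(vb : H), L a⟫_ℂ = ⟪vb, (⟨L a, hmem⟩ : ↥K)⟫_ℂ := by
        rw [Submodule.coe_inner]
      rw [h1, hvbdef, InnerProductSpace.toDual_symm_apply]
      have h2 : Gr ⟨L a, hmem⟩ = G (L a) := rfl
      have h3 : G (L a) = g ⟨L a, LinearMap.mem_range_self L a⟩ :=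
        hG1 ⟨L a, LinearMap.mem_range_self L a⟩
      rw [h2, h3]
      show g0 _ = _
      rw [hg0 a (LinearMap.mem_range_self L a), hφ]
  choose v hvK hvnorm hvchar using hv
  -- linearity of v
  have hvadd : ∀ b b' : ↥SA, v (b + b') = v b + v b' := by
    intro b b'
    have h := huniq (v (b + b') - (v b + v b'))
      (sub_mem (hvK _) (add_mem (hvK _) (hvK _))) ?_
    · exact sub_eq_zero.mp h
    · intro a
      rw [inner_sub_left, inner_add_left, hvchar, hvchar, hvchar, mul_add, map_add, map_add]
      ring
  have hvsmul : ∀ (d : ℂ) (b : ↥SA), v (d • b) = d • v b := by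
    intro d b
    have h := huniq (v (d • b) - d • v b)
      (sub_mem (hvK _) (Submodule.smul_mem _ _ (hvK _))) ?_
    · exact sub_eq_zero.mp h
    · intro a
      rw [inner_sub_left, inner_smul_left, hvchar, hvchar, mul_smul_comm, map_smul,
        smul_eq_mul, map_mul]
      ring
  set m : ↥SA →ₗ[ℂ] H :=
    { toFun := v
      map_add' := hvadd
      map_smul' := hvsmul } with hmdef
  have hm : ∀ b : ↥SA, m b = v b := fun _ => rfl
  have hkerm : LinearMap.ker L ≤ LinearMap.ker m := by
    intro b hbk
    rw [LinearMap.mem_ker] at hbk ⊢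
    rw [hm]
    have := hvnorm b
    rw [hbk, norm_zero] at this
    exact norm_le_zero_iff.mp this
  set f0 : ↥K0 →ₗ[ℂ] H :=
    ((LinearMap.ker L).liftQ m hkerm) ∘ₗ
      (LinearMap.quotKerEquivRange L).symm.toLinearMap with hf0def
  have hf0 : ∀ (a : ↥SA) (h : L a ∈ K0), f0 ⟨L a, h⟩ = v a := by
    intro a h
    have h1 : (LinearMap.quotKerEquivRange L).symm ⟨L a, h⟩
        = Submodule.Quotient.mk a := by
      rw [LinearEquiv.symm_apply_eq]
      exact Subtype.ext (LinearMap.quotKerEquivRange_apply_mk (f := L) a).symm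
    rw [hf0def]
    simp only [LinearMap.coe_comp, Function.comp_apply, LinearEquiv.coe_toLinearMap, h1]
    rw [Submodule.liftQ_apply, hm]
  have hf0b : ∀ z : ↥K0, ‖f0 z‖ ≤ 1 * ‖z‖ := by
    rintro ⟨z, hz⟩
    obtain ⟨a, rfl⟩ := hz
    rw [hf0 a ⟨a, rfl⟩, one_mul]
    exact hvnorm a
  set f : ↥K0 →L[ℂ] H := f0.mkContinuous 1 hf0b with hfdef
  set e : ↥K0 →L[ℂ] ↥K :=
    (Submodule.inclusion K0.le_topologicalClosure).mkContinuous 1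
      (fun z => by rw [one_mul]; rfl) with hedef
  have he_iso : Isometry e :=
    AddMonoidHomClass.isometry_of_norm e (fun z => rfl)
  have h_e : IsUniformInducing e := he_iso.isUniformInducing
  have h_dense : DenseRange e := by
    rintro ⟨z, hz⟩
    rw [Metric.mem_closure_iff]
    intro δ hδ
    have hz' : z ∈ closure (K0 : Set H) := by
      rw [← Submodule.topologicalClosure_coe]
      exact hz
    obtain ⟨y, hy, hdist⟩ := Metric.mem_closure_iff.mp hz' δ hδ
    refine ⟨e ⟨y, hy⟩, Set.mem_range_self _, ?_⟩
    rw [Subtype.dist_eq]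
    exact hdist
  set Text : ↥K →L[ℂ] H := f.extend e with hTextdef
  set P : H →L[ℂ] ↥K := Submodule.orthogonalProjectionOnto K with hPdef
  set T : H →L[ℂ] H := Text.comp P with hTdef
  have hmemK : ∀ a : ↥SA, L a ∈ K :=
    fun a => K0.le_topologicalClosure (LinearMap.mem_range_self L a)
  have hTeval : ∀ a : ↥SA, T (L a) = v a := by
    intro a
    have h1 : P (L a) = ⟨L a, hmemK a⟩ := by
      rw [hPdef]
      exact Submodule.orthogonalProjectionOnto_mem_subspace_eq_self (⟨L a, hmemK a⟩ : ↥K)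
    have h2 : e ⟨L a, LinearMap.mem_range_self L a⟩ = ⟨L a, hmemK a⟩ := rfl
    calc T (L a) = Text (P (L a)) := rfl
      _ = Text (e ⟨L a, LinearMap.mem_range_self L a⟩) := by rw [h1, h2]
      _ = f ⟨L a, LinearMap.mem_range_self L a⟩ := by
          rw [hTextdef]; exact ContinuousLinearMap.extend_eq f h_dense h_e _
      _ = v a := by
          show f0 _ = v a
          exact hf0 a (LinearMap.mem_range_self L a)
  -- algebraic facts about π
  have hadj : ∀ s : ↥SA, ContinuousLinearMap.adjoint (π ↑s) = π ↑(star s) := by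
    intro s
    rw [show ((star s : ↥SA) : A) = star (s : A) from rfl, map_star,
      ContinuousLinearMap.star_eq_adjoint]
  have hmul : ∀ (s a : ↥SA), π ↑s (L a) = L (s * a) := by
    intro s a
    rw [hL, hL, show ((s * a : ↥SA) : A) = (s : A) * a from rfl, map_mul,
      ContinuousLinearMap.mul_apply]
  -- invariance of K under π(SA)
  have hKinv : ∀ (s : ↥SA) (x : H), x ∈ K → π ↑s x ∈ K := by
    intro s x hx
    have hmapsto : Set.MapsTo (π ↑s) (K0 : Set H) (K0 : Set H) := by
      rintro z ⟨a, rfl⟩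
      exact ⟨s * a, (hmul s a).symm⟩
    have hx' : x ∈ closure (K0 : Set H) := by
      rw [← Submodule.topologicalClosure_coe]; exact hx
    exact map_mem_closure (π ↑s).continuous hx' hmapsto
  have hKorth : ∀ (s : ↥SA) (x : H), x ∈ Kᗮ → π ↑s x ∈ Kᗮ := by
    intro s x hx
    rw [Submodule.mem_orthogonal] at hx ⊢
    intro y hy
    have h1 : ⟪y, π ↑s x⟫_ℂ = ⟪π ↑(star s) y, x⟫_ℂ := by
      rw [← hadj s, ContinuousLinearMap.adjoint_inner_left]
    rw [h1]
    exact hx _ (hKinv (star s) y hy)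
  -- commutation of T with π(SA)
  have hmv : ∀ (s a : ↥SA), v (s * a) = π ↑s (v a) := by
    intro s a
    have h := huniq (v (s * a) - π ↑s (v a))
      (sub_mem (hvK _) (hKinv s _ (hvK a))) ?_
    · exact sub_eq_zero.mp h
    · intro c
      rw [inner_sub_left, hvchar]
      have h1 : ⟪π ↑s (v a), L c⟫_ℂ = ⟪v a, π ↑(star s) (L c)⟫_ℂ := by
        conv_lhs => rw [show π (s : A) = ContinuousLinearMap.adjoint (π ↑(star s)) by
          rw [hadj (star s), star_star]]
        rw [ContinuousLinearMap.adjoint_inner_left]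
      rw [h1, hmul (star s) c, hvchar]
      have h2 : star (star s * c) * a = star c * (s * a) := by
        rw [star_mul, star_star, mul_assoc]
      rw [h2, sub_self]
  have hTzero : ∀ x ∈ Kᗮ, T x = 0 := by
    intro x hx
    have : P x = 0 := Submodule.orthogonalProjectionOnto_apply_of_mem_orthogonal hx
    calc T x = Text (P x) := rfl
      _ = Text 0 := by rw [this]
      _ = 0 := map_zero _
  have hTcomm : ∀ s : ↥SA, π ↑s * T = T * π ↑s := by
    intro s
    have hKcase : ∀ x ∈ K, π ↑s (T x) = T (π ↑s x) := by
      have hcl : IsClosed {x : H | π ↑s (T x) = T (π ↑s x)} :=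
        isClosed_eq ((π ↑s).continuous.comp T.continuous)
          (T.continuous.comp (π ↑s).continuous)
      have hsub : (K0 : Set H) ⊆ {x : H | π ↑s (T x) = T (π ↑s x)} := by
        rintro z ⟨a, rfl⟩
        show π ↑s (T (L a)) = T (π ↑s (L a))
        rw [hTeval a, hmul s a, hTeval (s * a), hmv s a]
      intro x hx
      have hx' : x ∈ closure (K0 : Set H) := by
        rw [← Submodule.topologicalClosure_coe]; exact hx
      exact closure_minimal hsub hcl hx'
    ext x
    have hdecomp : x = (↑(P x) : H) + (x - ↑(P x)) := by abel
    have hmem1 : (↑(P x) : H) ∈ K := (P x).2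
    have hmem2 : x - ↑(P x) ∈ Kᗮ := Submodule.sub_starProjection_mem_orthogonal x
    rw [ContinuousLinearMap.mul_apply, ContinuousLinearMap.mul_apply]
    conv_lhs => rw [hdecomp]
    conv_rhs => rw [hdecomp]
    simp only [map_add, hTzero _ hmem2, hTzero _ (hKorth s _ hmem2), map_zero, add_zero,
      hKcase _ hmem1]
  refine ⟨T, hTcomm, ?_⟩
  intro a
  have h1 : Ω = L 1 := by
    rw [hL, show ((1 : ↥SA) : A) = 1 from rfl, map_one, ContinuousLinearMap.one_apply]
  have h2 : T (π ↑a Ω) = v a := by rw [← hL, hTeval]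
  rw [h2]
  have h3 : ⟪v a, Ω⟫_ℂ = starRingEnd ℂ (μ a) := by
    conv_lhs => rw [h1]
    rw [hvchar]
    rw [star_one, one_mul]
  rw [← inner_conj_symm, h3, Complex.conj_conj]

theorem Haag_duality_implies_conditioned_states_dense
    {A : Type*} [NormedRing A] [StarRing A] [CStarRing A] [NormedAlgebra ℂ A]
    [CompleteSpace A] [StarModule ℂ A] [NormedStarGroup A]
    (SA SB : StarSubalgebra ℂ A)
    (hcomm : ∀ a ∈ SA, ∀ b ∈ SB, a * b = b * a)
    (hint : ∀ x, x ∈ SA → x ∈ SB → ∃ c : ℂ, x = c • (1 : A))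
    (hgen : (SA ⊔ SB).topologicalClosure = ⊤)
    (ω : A →L[ℂ] ℂ) (hω1 : ω 1 = 1) (hωpos : ∀ a : A, 0 ≤ ω (star a * a))
    {H : Type*} [NormedAddCommGroup H] [InnerProductSpace ℂ H] [CompleteSpace H]
    (π : A →⋆ₐ[ℂ] (H →L[ℂ] H)) (Ω : H)
    (hΩ : ∀ a : A, ω a = ⟪Ω, π a Ω⟫_ℂ)
    (hcyc : (Submodule.span ℂ (Set.range fun a : A => π a Ω)).topologicalClosure = ⊤)
    (hpure : Set.centralizer (Set.range ⇑π)
      = Set.range (fun c : ℂ => c • (1 : H →L[ℂ] H)))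
    -- Haag duality: M_A = M_B'
    (hHaag : Set.centralizer (Set.centralizer (⇑π '' (SA : Set A)))
      = Set.centralizer (⇑π '' (SB : Set A))) :
    -- every ν in the real-linear span of [0, ω_A] is a weak* limit of the functionals
    -- a ↦ ω(a b), b ∈ A_B
    ∀ ν : SA →ₗ[ℂ] ℂ,
      ν ∈ Submodule.span ℝ {μ : SA →ₗ[ℂ] ℂ |
        (∀ a : SA, 0 ≤ μ (star a * a)) ∧ ∀ a : SA, 0 ≤ ω ((star a * a : SA) : A) - μ (star a * a)} →
      ∀ ε : ℝ, 0 < ε → ∀ (N : ℕ) (a : Fin N → SA),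
        ∃ b ∈ SB, ∀ i, ‖ν (a i) - ω (((a i : A)) * b)‖ < ε := by
  intro ν hν ε hε N a
  classical
  -- adjoint identities
  have hadjA : ∀ s : ↥SA, ContinuousLinearMap.adjoint (π ↑s) = π ↑(star s) := by
    intro s
    rw [show ((star s : ↥SA) : A) = star (s : A) from rfl, map_star,
      ContinuousLinearMap.star_eq_adjoint]
  have hadjB : ∀ s : ↥SB, ContinuousLinearMap.adjoint (π ↑s) = π ↑(star s) := by
    intro s
    rw [show ((star s : ↥SB) : A) = star (s : A) from rfl, map_star,
      ContinuousLinearMap.star_eq_adjoint]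
  -- part 1: representing operator T
  have hGood : ∃ T : H →L[ℂ] H, (∀ s : ↥SA, π ↑s * T = T * π ↑s) ∧
      ∀ x : ↥SA, ν x = ⟪Ω, T (π ↑x Ω)⟫_ℂ := by
    set Good : Submodule ℝ (↥SA →ₗ[ℂ] ℂ) :=
      { carrier := {ν' | ∃ T : H →L[ℂ] H, (∀ s : ↥SA, π ↑s * T = T * π ↑s) ∧
          ∀ x : ↥SA, ν' x = ⟪Ω, T (π ↑x Ω)⟫_ℂ}
        add_mem' := by
          rintro ν₁ ν₂ ⟨T₁, hc₁, hr₁⟩ ⟨T₂, hc₂, hr₂⟩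
          refine ⟨T₁ + T₂, fun s => by rw [mul_add, add_mul, hc₁ s, hc₂ s], fun x => ?_⟩
          rw [LinearMap.add_apply, hr₁ x, hr₂ x, ContinuousLinearMap.add_apply,
            inner_add_right]
        zero_mem' := ⟨0, fun s => by rw [mul_zero, zero_mul], fun x => by simp⟩
        smul_mem' := by
          rintro c ν' ⟨T, hc, hr⟩
          refine ⟨c • T, fun s => ?_, fun x => ?_⟩
          · ext w
            have hw := congrArg (fun (F : H →L[ℂ] H) => F w) (hc s)
            simp only [ContinuousLinearMap.mul_apply] at hw
            simp only [ContinuousLinearMap.mul_apply, ContinuousLinearMap.smul_apply,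
              ContinuousLinearMap.map_smul_of_tower, hw]
          · rw [LinearMap.smul_apply, hr x, ContinuousLinearMap.smul_apply]
            rw [show c • (T (π ↑x Ω)) = ((c : ℂ)) • (T (π ↑x Ω)) from
              (Complex.coe_smul c _).symm]
            rw [inner_smul_right]
            simp [Complex.real_smul] } with hGooddef
    have hsub : {μ : ↥SA →ₗ[ℂ] ℂ | (∀ a : ↥SA, 0 ≤ μ (star a * a)) ∧
        ∀ a : ↥SA, 0 ≤ ω ((star a * a : ↥SA) : A) - μ (star a * a)} ⊆ (Good : Set _) := by
      rintro μ ⟨hμpos, hμdom⟩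
      apply aux_rn π Ω SA μ hμpos
      intro a'
      have h1 : ω ((star a' * a' : ↥SA) : A) = ((‖π (↑a' : A) Ω‖ : ℂ)) ^ 2 := by
        rw [hΩ, show ((star a' * a' : ↥SA) : A) = star (a' : A) * (a' : A) from rfl,
          map_mul, ContinuousLinearMap.mul_apply, map_star,
          ContinuousLinearMap.star_eq_adjoint, ContinuousLinearMap.adjoint_inner_right]
        exact inner_self_eq_norm_sq_to_K _
      have h2 := hμdom a'
      have h3 := (Complex.nonneg_iff.mp h2).1
      rw [Complex.sub_re, h1] at h3
      have h4 : (((‖π (↑a' : A) Ω‖ : ℂ)) ^ 2).re = ‖π (↑a' : A) Ω‖ ^ 2 := by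
        rw [← Complex.ofReal_pow, Complex.ofReal_re]
      rw [h4] at h3
      linarith
    exact Submodule.span_le.mpr hsub hν
  obtain ⟨T, hTcomm, hTrepr⟩ := hGood
  -- the subspace K_B
  set Lb : ↥SB →ₗ[ℂ] H :=
    { toFun := fun b => π ↑b Ω
      map_add' := fun x y => by
        simp [AddMemClass.coe_add, map_add, ContinuousLinearMap.add_apply]
      map_smul' := fun c x => by
        simp [SetLike.val_smul, map_smul, ContinuousLinearMap.smul_apply] } with hLbdef
  have hLb : ∀ b : ↥SB, Lb b = π ↑b Ω := fun _ => rfl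
  set KB0 : Submodule ℂ H := LinearMap.range Lb with hKB0def
  set KB : Submodule ℂ H := KB0.topologicalClosure with hKBdef
  haveI : CompleteSpace KB := KB0.isClosed_topologicalClosure.completeSpace_coe
  set Q : H →L[ℂ] H := KB.subtypeL.comp (Submodule.orthogonalProjectionOnto KB) with hQdef
  have hQmem : ∀ x : H, Q x ∈ KB := fun x => (Submodule.orthogonalProjectionOnto KB x).2
  have hQfix : ∀ x ∈ KB, Q x = x := by
    intro x hx
    show (KB.subtypeL (Submodule.orthogonalProjectionOnto KB x) : H) = x
    rw [show x = ((⟨x, hx⟩ : ↥KB) : H) from rfl,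
      Submodule.orthogonalProjectionOnto_mem_subspace_eq_self (⟨x, hx⟩ : ↥KB)]
    rfl
  have hQzero : ∀ x ∈ KBᗮ, Q x = 0 := by
    intro x hx
    show (KB.subtypeL (Submodule.orthogonalProjectionOnto KB x) : H) = 0
    rw [Submodule.orthogonalProjectionOnto_apply_of_mem_orthogonal hx]
    rfl
  have hmulB : ∀ (s b : ↥SB), π ↑s (Lb b) = Lb (s * b) := by
    intro s b
    rw [hLb, hLb, show ((s * b : ↥SB) : A) = (s : A) * b from rfl, map_mul,
      ContinuousLinearMap.mul_apply]
  have hKBinv : ∀ (s : ↥SB) (x : H), x ∈ KB → π ↑s x ∈ KB := by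
    intro s x hx
    have hmapsto : Set.MapsTo (π ↑s) (KB0 : Set H) (KB0 : Set H) := by
      rintro z ⟨b, rfl⟩
      exact ⟨s * b, (hmulB s b).symm⟩
    have hx' : x ∈ closure (KB0 : Set H) := by
      rw [← Submodule.topologicalClosure_coe]; exact hx
    exact map_mem_closure (π ↑s).continuous hx' hmapsto
  have hKBorth : ∀ (s : ↥SB) (x : H), x ∈ KBᗮ → π ↑s x ∈ KBᗮ := by
    intro s x hx
    rw [Submodule.mem_orthogonal] at hx ⊢
    intro y hy
    have h1 : ⟪y, π ↑s x⟫_ℂ = ⟪π ↑(star s) y, x⟫_ℂ := by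
      rw [← hadjB s, ContinuousLinearMap.adjoint_inner_left]
    rw [h1]
    exact hx _ (hKBinv (star s) y hy)
  -- Q commutes with π(SB)
  have hQcent : Q ∈ Set.centralizer (⇑π '' (SB : Set A)) := by
    rw [Set.mem_centralizer_iff]
    rintro _ ⟨b, hb, rfl⟩
    set s : ↥SB := ⟨b, hb⟩ with hsdef
    show π ↑s * Q = Q * π ↑s
    ext x
    have hmem1 : (Q x : H) ∈ KB := hQmem x
    have hmem2 : x - Q x ∈ KBᗮ := by
      show x - (KB.subtypeL (Submodule.orthogonalProjectionOnto KB x) : H) ∈ KBᗮ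
      exact Submodule.sub_starProjection_mem_orthogonal x
    have hdecomp : x = Q x + (x - Q x) := by abel
    rw [ContinuousLinearMap.mul_apply, ContinuousLinearMap.mul_apply]
    conv_lhs => rw [hdecomp]
    conv_rhs => rw [hdecomp]
    simp only [map_add, hQzero _ hmem2, hQzero _ (hKBorth s _ hmem2), map_zero, add_zero,
      hQfix _ hmem1, hQfix _ (hKBinv s _ hmem1)]
  -- T commutes with Q via Haag duality
  have hcent : Set.centralizer (⇑π '' (SA : Set A))
      = Set.centralizer (Set.centralizer (⇑π '' (SB : Set A))) := by
    conv_rhs => rw [← hHaag]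
    rw [Set.centralizer_centralizer_centralizer]
  have hTcent : T ∈ Set.centralizer (Set.centralizer (⇑π '' (SB : Set A))) := by
    rw [← hcent, Set.mem_centralizer_iff]
    rintro _ ⟨s, hs, rfl⟩
    exact hTcomm ⟨s, hs⟩
  have hQT : Q * T = T * Q := Set.mem_centralizer_iff.mp hTcent Q hQcent
  -- ξ := T Ω lies in KB
  set ξ : H := T Ω with hξdef
  have hΩKB : Ω ∈ KB := by
    apply KB0.le_topologicalClosure
    refine ⟨1, ?_⟩
    rw [hLb, show ((1 : ↥SB) : A) = 1 from rfl, map_one, ContinuousLinearMap.one_apply]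
  have hξKB : ξ ∈ KB := by
    have h1 : Q (T Ω) = T (Q Ω) := by
      have := congrArg (fun (F : H →L[ℂ] H) => F Ω) hQT
      simpa [ContinuousLinearMap.mul_apply] using this
    have h2 : Q Ω = Ω := hQfix Ω hΩKB
    rw [hξdef, ← h2, ← h1]
    exact hQmem _
  -- the key identities
  have hkey : ∀ x : ↥SA, ν x = ⟪π ↑(star x) Ω, ξ⟫_ℂ := by
    intro x
    rw [hTrepr x]
    have h1 : T (π ↑x Ω) = π ↑x ξ := by
      have := congrArg (fun (F : H →L[ℂ] H) => F Ω) (hTcomm x)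
      simpa [ContinuousLinearMap.mul_apply] using this.symm
    rw [h1, ← hadjA x, ContinuousLinearMap.adjoint_inner_left]
  have homega : ∀ (x : ↥SA) (b : ↥SB), ω ((x : A) * (b : A))
      = ⟪π ↑(star x) Ω, Lb b⟫_ℂ := by
    intro x b
    rw [hΩ, map_mul, ContinuousLinearMap.mul_apply, ← hadjA x,
      ContinuousLinearMap.adjoint_inner_left, hLb]
  -- choose the approximating b
  set C : ℝ := ∑ i, ‖π ↑(star (a i)) Ω‖ with hCdef
  have hC0 : 0 ≤ C := Finset.sum_nonneg fun i _ => norm_nonneg _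
  have hCi : ∀ i, ‖π ↑(star (a i)) Ω‖ ≤ C :=
    fun i => Finset.single_le_sum (f := fun j => ‖π ↑(star (a j)) Ω‖)
      (fun j _ => norm_nonneg _) (Finset.mem_univ i)
  have hδ : 0 < ε / (C + 1) := div_pos hε (by linarith)
  have hξcl : ξ ∈ closure (KB0 : Set H) := by
    rw [← Submodule.topologicalClosure_coe]; exact hξKB
  obtain ⟨y, hy, hdist⟩ := Metric.mem_closure_iff.mp hξcl (ε / (C + 1)) hδ
  obtain ⟨b0, rfl⟩ := hy
  refine ⟨(b0 : A), b0.2, ?_⟩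
  intro i
  rw [hkey (a i), homega (a i) b0, ← inner_sub_right]
  calc ‖⟪π ↑(star (a i)) Ω, ξ - Lb b0⟫_ℂ‖
      ≤ ‖π ↑(star (a i)) Ω‖ * ‖ξ - Lb b0‖ := norm_inner_le_norm _ _
    _ ≤ (C + 1) * ‖ξ - Lb b0‖ := by
        apply mul_le_mul_of_nonneg_right _ (norm_nonneg _)
        linarith [hCi i]
    _ < (C + 1) * (ε / (C + 1)) := by
        apply mul_lt_mul_of_pos_left _ (by linarith)
        rw [← dist_eq_norm]
        exact hdist
    _ = ε := by field_simp
end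

section
/- Let ω be a pure state on a bipartite algebra and suppose a vector Φ ∈ K_A ⊗ K_B is distillable from ω, i.e. there exist unital completely positive maps D_j : B(K_j) → A_j with ω(D_A(a)D_B(b)) = ⟨Φ, (a ⊗ b)Φ⟩ for all a ∈ B(K_A), b ∈ B(K_B). If ω admits a compression into M_k with a tensor-split vector (Schmidt rank ≤ k), then the vector Schmidt rank of Φ is at most k. -/
/- STATEMENT 19 (monotonicity of the Schmidt rank / distillation bound): if a vector
Φ ∈ K_A ⊗ K_B is distillable from a pure bipartite state ω, and ω admits a compression into
M_k with a tensor-split vector, then the vector Schmidt rank of Φ is at most k. -/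

open scoped ComplexOrder InnerProductSpace

/-- The tensor product X ⊗ Y of operators on finite-dimensional Euclidean spaces, realized
via the Kronecker product of the corresponding matrices. -/
noncomputable def tensorOp {dA dB : ℕ}
    (X : EuclideanSpace ℂ (Fin dA) →L[ℂ] EuclideanSpace ℂ (Fin dA))
    (Y : EuclideanSpace ℂ (Fin dB) →L[ℂ] EuclideanSpace ℂ (Fin dB)) :
    EuclideanSpace ℂ (Fin dA × Fin dB) →L[ℂ] EuclideanSpace ℂ (Fin dA × Fin dB) :=
  Matrix.toEuclideanCLM (𝕜 := ℂ)
    (Matrix.kroneckerMap (· * ·) ((Matrix.toEuclideanCLM (𝕜 := ℂ)).symm X)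
      ((Matrix.toEuclideanCLM (𝕜 := ℂ)).symm Y))

/-- The elementary tensor x ⊗ y in the Euclidean tensor product ℂ^{dA} ⊗ ℂ^{dB}. -/
noncomputable def tensorVec {dA dB : ℕ} (x : EuclideanSpace ℂ (Fin dA))
    (y : EuclideanSpace ℂ (Fin dB)) : EuclideanSpace ℂ (Fin dA × Fin dB) :=
  (WithLp.equiv 2 (Fin dA × Fin dB → ℂ)).symm
    fun q => WithLp.equiv 2 (Fin dA → ℂ) x q.1 * WithLp.equiv 2 (Fin dB → ℂ) y q.2

/-!
Read a vector `v` of `𝕜ᵐ ⊗ 𝕜ⁿ` as its `m × n` coefficient matrix `M`: its Schmidt rank is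
`rank M`, and `⟪v, (X ⊗ Y) v⟫ = tr (X M Yᵀ Mᴴ)`. Suppose this vector state is reproduced, through
local linear maps `S` and `R`, by a vector with `k × k` coefficient matrix `W`. Writing `S†` for the
adjoint of `S` under the trace pairing, `M Z Mᴴ = S†(W (R Zᵀ)ᵀ Wᴴ)` for every `Z`. Hence the space
`{M Z Mᴴ}`, whose dimension is `(rank M)²`, lies in the range of `S†`, of dimension at most `k²`.
-/

open Module Matrix
open scoped Kronecker

namespace Matrix

section Rank

variable {K : Type*} [Field K] {l m n p q : Type*} [Fintype n]

theorem exists_injective_mulVec_mul_of_le_rank (M : Matrix m n K) {r : ℕ} (h : r ≤ M.rank) :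
    ∃ E : Matrix n (Fin r) K, Function.Injective (M * E).mulVec := by
  obtain ⟨u, hu⟩ := exists_linearIndependent_of_le_finrank h
  choose w hw using fun i => (u i).2
  have hcol : (M * of fun j i => w i j).col = Submodule.subtype _ ∘ u := by
    ext i a
    simp [← hw i, mul_apply, mulVec, dotProduct]
  exact ⟨_, mulVec_injective_iff.2 (hcol ▸ hu.map' _ (Submodule.ker_subtype _))⟩

theorem mul_right_injective_of_injective_mulVec {A : Matrix l n K}
    (hA : Function.Injective A.mulVec) : Function.Injective fun B : Matrix n m K => A * B :=
  fun _ _ h => ext_col fun j => hA congr(($h).col j)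

theorem mul_left_injective_of_injective_vecMul {A : Matrix n m K}
    (hA : Function.Injective A.vecMul) : Function.Injective fun B : Matrix l n K => B * A :=
  fun _ _ h => ext_row fun i => hA congr(($h).row i)

theorem rank_mul_rank_le_finrank_range [Fintype m] [Fintype p] [Fintype q]
    (M : Matrix m n K) (N : Matrix p q K) :
    M.rank * N.rank ≤
      finrank K (LinearMap.range (mulRightLinearMap m K N ∘ₗ mulLeftLinearMap p K M)) := by
  obtain ⟨E, hE⟩ := M.exists_injective_mulVec_mul_of_le_rank le_rfl
  obtain ⟨F, hF⟩ := Nᵀ.exists_injective_mulVec_mul_of_le_rank (rank_transpose N).ge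
  have hF' : Function.Injective (Fᵀ * N).vecMul := by
    have hFN : Fᵀ * N = (Nᵀ * F)ᵀ := by rw [transpose_mul, transpose_transpose]
    simpa only [hFN, vecMul_transpose] using hF
  have hinj : Function.Injective
      fun Y : Matrix (Fin M.rank) (Fin N.rank) K => M * E * Y * (Fᵀ * N) :=
    (mul_left_injective_of_injective_vecMul hF').comp (mul_right_injective_of_injective_mulVec hE)
  let embed := mulRightLinearMap n K Fᵀ ∘ₗ mulLeftLinearMap (Fin N.rank) K E
  calc M.rank * N.rank
      = finrank K (Matrix (Fin M.rank) (Fin N.rank) K) := by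
        rw [finrank_matrix, Fintype.card_fin, Fintype.card_fin, finrank_self, mul_one]
    _ = finrank K (LinearMap.range
          ((mulRightLinearMap m K N ∘ₗ mulLeftLinearMap p K M) ∘ₗ embed)) := by
      refine (LinearMap.finrank_range_of_inj fun Y Z h => hinj ?_).symm
      simpa only [embed, LinearMap.comp_apply, mulLeftLinearMap_apply, mulRightLinearMap_apply,
        Matrix.mul_assoc] using h
    _ ≤ _ := Submodule.finrank_mono (LinearMap.range_comp_le_range _ _)

theorem exists_mul_eq_of_rank_le [Fintype m] (M : Matrix m n K) {k : ℕ} (h : M.rank ≤ k) :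
    ∃ (X : Matrix m (Fin k) K) (Y : Matrix (Fin k) n K), X * Y = M := by
  classical
  obtain ⟨i, hi⟩ := finrank_le_iff_exists_linearMap.1 (h.trans_eq (finrank_fin_fun K).symm)
  obtain ⟨j, hj⟩ := i.exists_leftInverse_of_injective (LinearMap.ker_eq_bot.2 hi)
  refine ⟨LinearMap.toMatrix' ((LinearMap.range M.mulVecLin).subtype ∘ₗ j),
    LinearMap.toMatrix' (i ∘ₗ M.mulVecLin.rangeRestrict), ?_⟩
  rw [← LinearMap.toMatrix'_comp, LinearMap.comp_assoc, ← LinearMap.comp_assoc _ i j, hj,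
    LinearMap.id_comp]
  exact LinearMap.toMatrix'_toLin' M

end Rank

section TraceDual

variable {R : Type*} [CommSemiring R] {m n : Type*} [Fintype m] [DecidableEq m] [Fintype n]

/-- The adjoint of `S` for the pairing `(X, Y) ↦ tr (X * Y)`. -/
def traceDual (S : Matrix m m R →ₗ[R] Matrix n n R) : Matrix n n R →ₗ[R] Matrix m m R where
  toFun K := of fun a b => trace (S (single b a 1) * K)
  map_add' K L := by ext; simp [Matrix.mul_add]
  map_smul' c K := by ext; simp

theorem trace_mul_traceDual (S : Matrix m m R →ₗ[R] Matrix n n R) (X : Matrix m m R)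
    (K : Matrix n n R) : trace (X * traceDual S K) = trace (S X * K) := by
  calc trace (X * traceDual S K)
      = ∑ a, ∑ b, X a b * trace (S (single a b 1) * K) := by
        simp only [trace, diag, mul_apply, traceDual, LinearMap.coe_mk, AddHom.coe_mk, of_apply]
    _ = trace (S (∑ a, ∑ b, single a b (X a b)) * K) := by
        have hsingle : ∀ a b, single a b (X a b) = X a b • single a b (1 : R) := by simp
        simp only [hsingle, map_sum, map_smul, Finset.sum_mul, smul_mul, trace_sum, trace_smul,
          smul_eq_mul]
    _ = trace (S X * K) := by rw [← matrix_eq_sum_single]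

end TraceDual

end Matrix

section SchmidtRank

variable {𝕜 : Type*} [RCLike 𝕜] {m n p q : Type*}

def coeffMatrix (v : EuclideanSpace 𝕜 (m × n)) : Matrix m n 𝕜 :=
  of fun i j => v (i, j)

variable [Fintype m] [DecidableEq m] [Fintype n] [DecidableEq n]

theorem inner_toEuclideanLin_kronecker (v : EuclideanSpace 𝕜 (m × n)) (X : Matrix m m 𝕜)
    (Y : Matrix n n 𝕜) :
    ⟪v, toEuclideanLin (X ⊗ₖ Y) v⟫_𝕜 = trace (X * (coeffMatrix v * Yᵀ * (coeffMatrix v)ᴴ)) := by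
  have hv : WithLp.ofLp v = vec (coeffMatrix v)ᵀ := rfl
  rw [EuclideanSpace.inner_eq_star_dotProduct, toLpLin_apply, WithLp.ofLp_toLp, hv,
    kronecker_mulVec_vec, dotProduct_comm, star_vec_dotProduct_vec, ← trace_transpose]
  simp only [transpose_mul, transpose_transpose, Matrix.mul_assoc]
  rfl

variable [Fintype p] [DecidableEq p] [Fintype q] [DecidableEq q]

theorem rank_coeffMatrix_le_of_inner_kronecker_eq {v : EuclideanSpace 𝕜 (m × n)}
    {w : EuclideanSpace 𝕜 (p × q)} (S : Matrix m m 𝕜 →ₗ[𝕜] Matrix p p 𝕜)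
    (R : Matrix n n 𝕜 →ₗ[𝕜] Matrix q q 𝕜)
    (h : ∀ X Y, ⟪v, toEuclideanLin (X ⊗ₖ Y) v⟫_𝕜 = ⟪w, toEuclideanLin (S X ⊗ₖ R Y) w⟫_𝕜) :
    (coeffMatrix v).rank ≤ Fintype.card p := by
  set M := coeffMatrix v
  set W := coeffMatrix w
  have hconj : ∀ Z, M * Z * Mᴴ = traceDual S (W * (R Zᵀ)ᵀ * Wᴴ) := fun Z =>
    ext_iff_trace_mul_left.2 fun X => by
      rw [trace_mul_traceDual, ← inner_toEuclideanLin_kronecker, ← h,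
        inner_toEuclideanLin_kronecker, transpose_transpose]
  have hrange : LinearMap.range (mulRightLinearMap m 𝕜 Mᴴ ∘ₗ mulLeftLinearMap n 𝕜 M) ≤
      LinearMap.range (traceDual S) := by
    rintro _ ⟨Z, rfl⟩
    exact ⟨_, (hconj Z).symm⟩
  have hsq : M.rank * M.rank ≤ Fintype.card p * Fintype.card p := by
    calc M.rank * M.rank = M.rank * Mᴴ.rank := by rw [rank_conjTranspose]
      _ ≤ _ := rank_mul_rank_le_finrank_range M Mᴴ
      _ ≤ finrank 𝕜 (LinearMap.range (traceDual S)) := Submodule.finrank_mono hrange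
      _ ≤ finrank 𝕜 (Matrix p p 𝕜) := LinearMap.finrank_range_le _
      _ = _ := by rw [finrank_matrix, finrank_self, mul_one]
  exact Nat.mul_self_le_mul_self_iff.1 hsq

end SchmidtRank

theorem tensorOp_toEuclideanCLM {dA dB : ℕ} (X : Matrix (Fin dA) (Fin dA) ℂ)
    (Y : Matrix (Fin dB) (Fin dB) ℂ) :
    tensorOp (toEuclideanCLM (𝕜 := ℂ) X) (toEuclideanCLM (𝕜 := ℂ) Y) =
      toEuclideanCLM (𝕜 := ℂ) (X ⊗ₖ Y) := by
  simp only [tensorOp, StarAlgEquiv.symm_apply_apply]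

theorem exists_eq_sum_tensorVec_of_rank_le {dA dB k : ℕ} (v : EuclideanSpace ℂ (Fin dA × Fin dB))
    (h : (coeffMatrix v).rank ≤ k) :
    ∃ (c : Fin k → ℂ) (x : Fin k → EuclideanSpace ℂ (Fin dA))
      (y : Fin k → EuclideanSpace ℂ (Fin dB)), v = ∑ i, c i • tensorVec (x i) (y i) := by
  obtain ⟨X, Y, hXY⟩ := (coeffMatrix v).exists_mul_eq_of_rank_le h
  refine ⟨1, fun i => WithLp.toLp 2 (X.col i), fun i => WithLp.toLp 2 (Y.row i), ?_⟩
  ext ⟨a, b⟩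
  have hv : v (a, b) = (X * Y) a b := by rw [hXY]; rfl
  simp [hv, tensorVec, mul_apply]

theorem schmidt_rank_of_distillable_vector_le_general
    {A : Type*} [NormedRing A] [StarRing A] [NormedAlgebra ℂ A] [StarModule ℂ A]
    (SA SB : StarSubalgebra ℂ A)
    (ω : A →L[ℂ] ℂ)
    -- the vector Φ ∈ K_A ⊗ K_B is distillable from ω via unital cp maps D_A, D_B
    (dA dB : ℕ) (Φ : EuclideanSpace ℂ (Fin dA × Fin dB))
    (DA : (EuclideanSpace ℂ (Fin dA) →L[ℂ] EuclideanSpace ℂ (Fin dA)) →ₗ[ℂ] A)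
    (DB : (EuclideanSpace ℂ (Fin dB) →L[ℂ] EuclideanSpace ℂ (Fin dB)) →ₗ[ℂ] A)
    (hDAmem : ∀ X, DA X ∈ SA) (hDBmem : ∀ Y, DB Y ∈ SB)
    (hdistill : ∀ (X : EuclideanSpace ℂ (Fin dA) →L[ℂ] EuclideanSpace ℂ (Fin dA))
        (Y : EuclideanSpace ℂ (Fin dB) →L[ℂ] EuclideanSpace ℂ (Fin dB)),
      ω (DA X * DB Y) = ⟪Φ, tensorOp X Y Φ⟫_ℂ)
    -- ω admits a compression into M_k with a tensor-split vector
    (k : ℕ)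
    (CmA : SA →ₗ[ℂ] Matrix (Fin k) (Fin k) ℂ) (CmB : SB →ₗ[ℂ] Matrix (Fin k) (Fin k) ℂ)
    (Ψ : EuclideanSpace ℂ (Fin k × Fin k))
    (hcompr : ∀ (a : SA) (b : SB),
      ω ((a : A) * (b : A))
        = ⟪Ψ, Matrix.toEuclideanLin (Matrix.kroneckerMap (· * ·) (CmA a) (CmB b)) Ψ⟫_ℂ) :
    -- then the vector Schmidt rank of Φ is at most k
    ∃ (c : Fin k → ℂ) (x : Fin k → EuclideanSpace ℂ (Fin dA))
      (y : Fin k → EuclideanSpace ℂ (Fin dB)),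
      Φ = ∑ i, c i • tensorVec (x i) (y i) := by
  let TA := CmA ∘ₗ DA.codRestrict (Subalgebra.toSubmodule SA.toSubalgebra) hDAmem ∘ₗ
    (toEuclideanCLM (𝕜 := ℂ)).toAlgEquiv.toLinearMap
  let TB := CmB ∘ₗ DB.codRestrict (Subalgebra.toSubmodule SB.toSubalgebra) hDBmem ∘ₗ
    (toEuclideanCLM (𝕜 := ℂ)).toAlgEquiv.toLinearMap
  refine exists_eq_sum_tensorVec_of_rank_le Φ ?_
  simpa only [Fintype.card_fin] using rank_coeffMatrix_le_of_inner_kronecker_eq (w := Ψ) TA TB fun X Y => by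
    have := (hdistill (toEuclideanCLM (𝕜 := ℂ) X) (toEuclideanCLM (𝕜 := ℂ) Y)).symm.trans
      (hcompr ⟨_, hDAmem _⟩ ⟨_, hDBmem _⟩)
    rwa [tensorOp_toEuclideanCLM] at this

theorem schmidt_rank_of_distillable_vector_le
    {A : Type*} [NormedRing A] [StarRing A] [CStarRing A] [NormedAlgebra ℂ A]
    [CompleteSpace A] [StarModule ℂ A] [NormedStarGroup A]
    (SA SB : StarSubalgebra ℂ A)
    (hcomm : ∀ a ∈ SA, ∀ b ∈ SB, a * b = b * a)
    (hint : ∀ x, x ∈ SA → x ∈ SB → ∃ c : ℂ, x = c • (1 : A))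
    (hgen : (SA ⊔ SB).topologicalClosure = ⊤)
    (ω : A →L[ℂ] ℂ) (hω1 : ω 1 = 1) (hωpos : ∀ a : A, 0 ≤ ω (star a * a))
    -- ω is pure
    (hωpure : ∀ ν : A →ₗ[ℂ] ℂ, (∀ a, 0 ≤ ν (star a * a)) →
      (∀ a, 0 ≤ ω (star a * a) - ν (star a * a)) →
      ∃ s : ℝ, 0 ≤ s ∧ s ≤ 1 ∧ ∀ a, ν a = (s : ℂ) * ω a)
    -- the vector Φ ∈ K_A ⊗ K_B is distillable from ω via unital cp maps D_A, D_B
    (dA dB : ℕ) (Φ : EuclideanSpace ℂ (Fin dA × Fin dB))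
    (DA : (EuclideanSpace ℂ (Fin dA) →L[ℂ] EuclideanSpace ℂ (Fin dA)) →ₗ[ℂ] A)
    (DB : (EuclideanSpace ℂ (Fin dB) →L[ℂ] EuclideanSpace ℂ (Fin dB)) →ₗ[ℂ] A)
    (hDAmem : ∀ X, DA X ∈ SA) (hDBmem : ∀ Y, DB Y ∈ SB)
    (hDA1 : DA 1 = 1) (hDB1 : DB 1 = 1)
    (hDAcp : ∀ (N : ℕ) (X : Fin N → (EuclideanSpace ℂ (Fin dA) →L[ℂ] EuclideanSpace ℂ (Fin dA))),
      ∃ y : Matrix (Fin N) (Fin N) A,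
        Matrix.of (fun i j => DA (star (X i) * X j)) = star y * y)
    (hDBcp : ∀ (N : ℕ) (Y : Fin N → (EuclideanSpace ℂ (Fin dB) →L[ℂ] EuclideanSpace ℂ (Fin dB))),
      ∃ y : Matrix (Fin N) (Fin N) A,
        Matrix.of (fun i j => DB (star (Y i) * Y j)) = star y * y)
    (hdistill : ∀ (X : EuclideanSpace ℂ (Fin dA) →L[ℂ] EuclideanSpace ℂ (Fin dA))
        (Y : EuclideanSpace ℂ (Fin dB) →L[ℂ] EuclideanSpace ℂ (Fin dB)),
      ω (DA X * DB Y) = ⟪Φ, tensorOp X Y Φ⟫_ℂ)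
    -- ω admits a compression into M_k with a tensor-split vector
    (k : ℕ)
    (CmA : SA →ₗ[ℂ] Matrix (Fin k) (Fin k) ℂ) (CmB : SB →ₗ[ℂ] Matrix (Fin k) (Fin k) ℂ)
    (hCmA1 : CmA 1 = 1) (hCmB1 : CmB 1 = 1)
    (hCmAcp : ∀ (N : ℕ) (a : Fin N → SA) (ξ : Fin N → EuclideanSpace ℂ (Fin k)),
      0 ≤ ∑ i : Fin N, ∑ j : Fin N,
        ⟪ξ i, Matrix.toEuclideanLin (CmA (star (a i) * a j)) (ξ j)⟫_ℂ)
    (hCmBcp : ∀ (N : ℕ) (b : Fin N → SB) (ξ : Fin N → EuclideanSpace ℂ (Fin k)),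
      0 ≤ ∑ i : Fin N, ∑ j : Fin N,
        ⟪ξ i, Matrix.toEuclideanLin (CmB (star (b i) * b j)) (ξ j)⟫_ℂ)
    (Ψ : EuclideanSpace ℂ (Fin k × Fin k)) (hΨ : ‖Ψ‖ = 1)
    (hcompr : ∀ (a : SA) (b : SB),
      ω ((a : A) * (b : A))
        = ⟪Ψ, Matrix.toEuclideanLin (Matrix.kroneckerMap (· * ·) (CmA a) (CmB b)) Ψ⟫_ℂ) :
    -- then the vector Schmidt rank of Φ is at most k
    ∃ (c : Fin k → ℂ) (x : Fin k → EuclideanSpace ℂ (Fin dA))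
      (y : Fin k → EuclideanSpace ℂ (Fin dB)),
      Φ = ∑ i, c i • tensorVec (x i) (y i) :=
  schmidt_rank_of_distillable_vector_le_general SA SB ω dA dB Φ DA DB hDAmem hDBmem hdistill k CmA
    CmB Ψ hcompr
end
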